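/- arXiv:0909.2231 — 4 statements merged into one kernel-verified Lean document; each statement's English description precedes it below -/
import Mathlib

section
/- Let X be a topological space and (Kₙ)ₙ a sequence of subsets of ℝ^X; let Γ = ⋃ₙ Kₙ and suppose that for each n ∈ ℕ the set Aₙ of points x ∈ X at which the family Kₙ is equicontinuous is a residual subset of X. Then X is conditionally σ*_{C(X_Γ)}-α-favorable, where X_Γ is the set X equipped with the topology generated by the functions in Γ and C(X_Γ) is the set of real-valued functions on X continuous for that topology. In particular, X is conditionally σ*_Γ-α-favorable. -/
open Set Topology Filter

namespace SepJoint

/-- The list `[f 0, …, f (n-1)]` of the first `n` values of a sequence. -/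
def hist {A : Type*} (f : ℕ → A) (n : ℕ) : List A := List.ofFn (fun i : Fin n => f i)

variable (X : Type*) [TopologicalSpace X]

/-- A strategy for player β in games of type `𝒥` (with points): from the list of α's
previous moves `(Uᵢ, aᵢ)`, produce β's next open set `Vₙ`. -/
abbrev BetaStrategy := List (Set X × X) → Set X

/-- A strategy for player α in games of type `𝒥`: from the list `[V₀, …, Vₙ]` of β's moves
(the last being the one to respond to), produce α's move `(Uₙ, aₙ)`. -/
abbrev AlphaStrategy := List (Set X) → Set X × X

/-- A strategy for player β in games of type `𝒥*`: from the list of α's previous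
moves `Uᵢ`, produce β's next open set `Vₙ`. -/
abbrev BetaStrategyStar := List (Set X) → Set X

/-- A strategy for player α in games of type `𝒥*`. -/
abbrev AlphaStrategyStar := List (Set X) → Set X

variable {X}

/-! ### Games of type `𝒥` (α plays pairs `(Uₙ, aₙ)`) -/

/-- α has played legally against the β-strategy `σ` at all stages `< n`:
each `Uᵢ` is a nonempty open subset of β's move `Vᵢ = σ(history)`. -/
def AlphaLegal (σ : BetaStrategy X) (U : ℕ → Set X) (a : ℕ → X) (n : ℕ) : Prop :=
  ∀ i < n, IsOpen (U i) ∧ (U i).Nonempty ∧ U i ⊆ σ (hist (fun j => (U j, a j)) i)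

/-- `σ` is a legal strategy for β: against any legal finite history it produces a nonempty
open set contained in α's previous move. -/
def BetaLegal (σ : BetaStrategy X) : Prop :=
  ∀ (U : ℕ → Set X) (a : ℕ → X) (n : ℕ), AlphaLegal σ U a n →
    IsOpen (σ (hist (fun j => (U j, a j)) n)) ∧
    (σ (hist (fun j => (U j, a j)) n)).Nonempty ∧
    ∀ m, n = m + 1 → σ (hist (fun j => (U j, a j)) n) ⊆ U m

/-- The winning condition for α in the game `𝒥_Γ` on the play with moves `(Uₙ, aₙ)`:
for each `g ∈ Γ` there is `t ∈ ⋂ₙ Uₙ` with `g t` in the closure of `{g (aₙ) : n}`. -/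
def AlphaWinsGamma (Γ : Set (X → ℝ)) (U : ℕ → Set X) (a : ℕ → X) : Prop :=
  ∀ g ∈ Γ, ∃ t ∈ (⋂ n, U n), g t ∈ closure (Set.range fun n => g (a n))

/-- The winning condition for α in the game `𝒥` on the play with moves `(Uₙ, aₙ)`:
`(⋂ₙ Uₙ) ∩ closure {aₙ : n} ≠ ∅`. -/
def AlphaWinsPlain (U : ℕ → Set X) (a : ℕ → X) : Prop :=
  ((⋂ n, U n) ∩ closure (Set.range a)).Nonempty

/-- `σ` is a winning strategy for β in the game `𝒥_Γ`. -/
def BetaWinningGamma (Γ : Set (X → ℝ)) (σ : BetaStrategy X) : Prop :=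
  BetaLegal σ ∧ ∀ U a, (∀ n, AlphaLegal σ U a n) → ¬ AlphaWinsGamma Γ U a

/-- `σ` is a winning strategy for β in the game `𝒥`. -/
def BetaWinningPlain (σ : BetaStrategy X) : Prop :=
  BetaLegal σ ∧ ∀ U a, (∀ n, AlphaLegal σ U a n) → ¬ AlphaWinsPlain U a

/-- `X` is σ_Γ-β-defavorable: β has no winning strategy in the game `𝒥_Γ`. -/
def SigmaGammaBetaDefavorable (X : Type*) [TopologicalSpace X] (Γ : Set (X → ℝ)) : Prop :=
  ¬ ∃ σ : BetaStrategy X, BetaWinningGamma Γ σ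

/-- `X` is σ-β-defavorable: β has no winning strategy in the game `𝒥`. -/
def SigmaBetaDefavorable (X : Type*) [TopologicalSpace X] : Prop :=
  ¬ ∃ σ : BetaStrategy X, BetaWinningPlain σ

/-- Given the α-strategy `τ` and β's moves `V`, α's `n`-th move `(Uₙ, aₙ) = τ [V₀, …, Vₙ]`. -/
def alphaMove (τ : AlphaStrategy X) (V : ℕ → Set X) (n : ℕ) : Set X × X :=
  τ (hist V (n + 1))

/-- `τ` is a legal strategy for α: along any legal history of β-moves it answers with a
nonempty open subset of β's last move. -/
def AlphaStratLegal (τ : AlphaStrategy X) : Prop :=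
  ∀ (V : ℕ → Set X) (n : ℕ), (IsOpen (V 0) ∧ (V 0).Nonempty) →
    (∀ i < n, IsOpen (V (i + 1)) ∧ (V (i + 1)).Nonempty ∧ V (i + 1) ⊆ (alphaMove τ V i).1) →
    IsOpen (alphaMove τ V n).1 ∧ (alphaMove τ V n).1.Nonempty ∧ (alphaMove τ V n).1 ⊆ V n

/-- `V` is a full run of legal moves of β against the α-strategy `τ`. -/
def BetaLegalRun (τ : AlphaStrategy X) (V : ℕ → Set X) : Prop :=
  IsOpen (V 0) ∧ (V 0).Nonempty ∧
    ∀ n, IsOpen (V (n + 1)) ∧ (V (n + 1)).Nonempty ∧ V (n + 1) ⊆ (alphaMove τ V n).1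

/-- `τ` is a conditionally winning strategy for α in the game `𝒥_Γ`: every compatible play
with `⋂ₙ Uₙ ≠ ∅` fulfils the winning condition for α. -/
def CondAlphaWinningGamma (Γ : Set (X → ℝ)) (τ : AlphaStrategy X) : Prop :=
  AlphaStratLegal τ ∧
    ∀ V, BetaLegalRun τ V → (⋂ n, (alphaMove τ V n).1).Nonempty →
      AlphaWinsGamma Γ (fun n => (alphaMove τ V n).1) (fun n => (alphaMove τ V n).2)

/-- `X` is conditionally σ_Γ-α-favorable. -/
def CondSigmaGammaAlphaFavorable (X : Type*) [TopologicalSpace X] (Γ : Set (X → ℝ)) : Prop :=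
  ∃ τ : AlphaStrategy X, CondAlphaWinningGamma Γ τ

/-- `τ` is a conditionally winning strategy for α in the game `𝒥`. -/
def CondAlphaWinningPlain (τ : AlphaStrategy X) : Prop :=
  AlphaStratLegal τ ∧
    ∀ V, BetaLegalRun τ V → (⋂ n, (alphaMove τ V n).1).Nonempty →
      AlphaWinsPlain (fun n => (alphaMove τ V n).1) (fun n => (alphaMove τ V n).2)

/-- `X` is conditionally σ-α-favorable. -/
def CondSigmaAlphaFavorable (X : Type*) [TopologicalSpace X] : Prop :=
  ∃ τ : AlphaStrategy X, CondAlphaWinningPlain τ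

/-! ### Games of type `𝒥*` (α plays only open sets) -/

/-- α has played legally against the β-strategy `σ` in `𝒥*` at all stages `< n`. -/
def AlphaLegalStar (σ : BetaStrategyStar X) (U : ℕ → Set X) (n : ℕ) : Prop :=
  ∀ i < n, IsOpen (U i) ∧ (U i).Nonempty ∧ U i ⊆ σ (hist U i)

/-- `σ` is a legal strategy for β in `𝒥*`. -/
def BetaLegalStar (σ : BetaStrategyStar X) : Prop :=
  ∀ (U : ℕ → Set X) (n : ℕ), AlphaLegalStar σ U n →
    IsOpen (σ (hist U n)) ∧ (σ (hist U n)).Nonempty ∧ ∀ m, n = m + 1 → σ (hist U n) ⊆ U m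

/-- The winning condition for α in the game `𝒥*_Γ` on the play with α-moves `Uₙ`:
for every sequence `(aₙ)` with `aₙ ∈ Uₙ` and every `g ∈ Γ`, there is `t ∈ ⋂ₙ Uₙ` with
`g t` in the closure of `{g (aₙ) : n}`. -/
def AlphaWinsStar (Γ : Set (X → ℝ)) (U : ℕ → Set X) : Prop :=
  ∀ a : ℕ → X, (∀ n, a n ∈ U n) → ∀ g ∈ Γ,
    ∃ t ∈ (⋂ n, U n), g t ∈ closure (Set.range fun n => g (a n))

/-- `σ` is a winning strategy for β in the game `𝒥*_Γ`. -/
def BetaWinningStar (Γ : Set (X → ℝ)) (σ : BetaStrategyStar X) : Prop :=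
  BetaLegalStar σ ∧ ∀ U, (∀ n, AlphaLegalStar σ U n) → ¬ AlphaWinsStar Γ U

/-- `X` is σ*_Γ-β-defavorable: β has no winning strategy in `𝒥*_Γ`. -/
def SigmaStarBetaDefavorable (X : Type*) [TopologicalSpace X] (Γ : Set (X → ℝ)) : Prop :=
  ¬ ∃ σ : BetaStrategyStar X, BetaWinningStar Γ σ

/-- Given the α-strategy `τ` and β's moves `V`, α's `n`-th move `Uₙ = τ [V₀, …, Vₙ]` in `𝒥*`. -/
def alphaMoveStar (τ : AlphaStrategyStar X) (V : ℕ → Set X) (n : ℕ) : Set X :=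
  τ (hist V (n + 1))

/-- `τ` is a legal strategy for α in `𝒥*`. -/
def AlphaStratLegalStar (τ : AlphaStrategyStar X) : Prop :=
  ∀ (V : ℕ → Set X) (n : ℕ), (IsOpen (V 0) ∧ (V 0).Nonempty) →
    (∀ i < n, IsOpen (V (i + 1)) ∧ (V (i + 1)).Nonempty ∧ V (i + 1) ⊆ alphaMoveStar τ V i) →
    IsOpen (alphaMoveStar τ V n) ∧ (alphaMoveStar τ V n).Nonempty ∧ alphaMoveStar τ V n ⊆ V n

/-- `V` is a full run of legal moves of β against the α-strategy `τ` in `𝒥*`. -/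
def BetaLegalRunStar (τ : AlphaStrategyStar X) (V : ℕ → Set X) : Prop :=
  IsOpen (V 0) ∧ (V 0).Nonempty ∧
    ∀ n, IsOpen (V (n + 1)) ∧ (V (n + 1)).Nonempty ∧ V (n + 1) ⊆ alphaMoveStar τ V n

/-- `τ` is a winning strategy for α in the game `𝒥*_Γ`. -/
def AlphaWinningStar (Γ : Set (X → ℝ)) (τ : AlphaStrategyStar X) : Prop :=
  AlphaStratLegalStar τ ∧
    ∀ V, BetaLegalRunStar τ V → AlphaWinsStar Γ (fun n => alphaMoveStar τ V n)

/-- `τ` is a conditionally winning strategy for α in the game `𝒥*_Γ`. -/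
def CondAlphaWinningStar (Γ : Set (X → ℝ)) (τ : AlphaStrategyStar X) : Prop :=
  AlphaStratLegalStar τ ∧
    ∀ V, BetaLegalRunStar τ V → (⋂ n, alphaMoveStar τ V n).Nonempty →
      AlphaWinsStar Γ (fun n => alphaMoveStar τ V n)

/-- `X` is σ*_Γ-α-favorable. -/
def SigmaStarAlphaFavorable (X : Type*) [TopologicalSpace X] (Γ : Set (X → ℝ)) : Prop :=
  ∃ τ : AlphaStrategyStar X, AlphaWinningStar Γ τ

/-- `X` is conditionally σ*_Γ-α-favorable. -/
def CondSigmaStarAlphaFavorable (X : Type*) [TopologicalSpace X] (Γ : Set (X → ℝ)) : Prop :=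
  ∃ τ : AlphaStrategyStar X, CondAlphaWinningStar Γ τ

/-! ### Auxiliary notions -/

/-- `f : X × K → ℝ` is separately continuous. -/
def SeparatelyContinuous {K : Type*} [TopologicalSpace K] (f : X × K → ℝ) : Prop :=
  (∀ x, Continuous fun y => f (x, y)) ∧ (∀ y, Continuous fun x => f (x, y))

/-- The map `φ : K → ℝ^X`, `φ(y)(x) = f(x, y)`. -/
def phi {X K : Type*} (f : X × K → ℝ) (y : K) : X → ℝ := fun x => f (x, y)

/-- A sequence `(Wₙ)` of subsets of `K` is countably pair complete with respect to `(φ, Γ)`: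
for all sequences `yₙ, zₙ ∈ Wₙ`, the sequence `φ(yₙ) - φ(zₙ)` has a cluster point in `Γ`
(`ℝ^X` carrying the product, i.e. pointwise convergence, topology). -/
def PairComplete {K : Type*} (f : X × K → ℝ) (Γ : Set (X → ℝ)) (W : ℕ → Set K) : Prop :=
  ∀ y z : ℕ → K, (∀ n, y n ∈ W n) → (∀ n, z n ∈ W n) →
    ∃ g ∈ Γ, MapClusterPt g atTop (fun n => phi f (y n) - phi f (z n))

/-- `f` is ε-continuous at `p`. -/
def EpsCont {K : Type*} [TopologicalSpace K] (f : X × K → ℝ) (ε : ℝ) (p : X × K) : Prop :=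
  ∃ O ∈ 𝓝 p, ∀ q ∈ O, |f p - f q| < ε

/-- `Y` is a bounded subset of `Z`: every continuous real-valued function on `Z`
is bounded on `Y`. -/
def BoundedIn {Z : Type*} [TopologicalSpace Z] (Y : Set Z) : Prop :=
  ∀ g : Z → ℝ, Continuous g → ∃ M, ∀ y ∈ Y, |g y| ≤ M

/-- `Y` is relatively countably compact in `Z`: every sequence in `Y` has a cluster
point in `Z`. -/
def RelCountablyCompact {Z : Type*} [TopologicalSpace Z] (Y : Set Z) : Prop :=
  ∀ u : ℕ → Z, (∀ n, u n ∈ Y) → ∃ z : Z, MapClusterPt z atTop u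

/-- `K` is pseudocompact: Tychonoff and every continuous real-valued function is bounded. -/
def Pseudocompact (K : Type*) [TopologicalSpace K] : Prop :=
  T35Space K ∧ BoundedIn (Set.univ : Set K)

/-- `Y` is Čech-complete: Tychonoff, and there is a sequence of open covers of `Y` which is
complete: any filter base of nonempty closed sets, containing for each `n` a set included
in a member of the `n`-th cover, has nonempty intersection. -/
def CechComplete (Y : Type*) [TopologicalSpace Y] : Prop :=
  T35Space Y ∧ ∃ 𝒰 : ℕ → Set (Set Y),
    (∀ n, ∀ U ∈ 𝒰 n, IsOpen U) ∧ (∀ n, ⋃₀ 𝒰 n = Set.univ) ∧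
    ∀ ℱ : Set (Set Y),
      (∀ F ∈ ℱ, IsClosed F) → ℱ.Nonempty → (∀ F ∈ ℱ, F.Nonempty) →
      (∀ F₁ ∈ ℱ, ∀ F₂ ∈ ℱ, ∃ F₃ ∈ ℱ, F₃ ⊆ F₁ ∩ F₂) →
      (∀ n, ∃ F ∈ ℱ, ∃ U ∈ 𝒰 n, F ⊆ U) →
      (⋂₀ ℱ).Nonempty

/-- `Y` is a p-space: Tychonoff, and there is a sequence `(𝒰ₙ)` of open covers of `Y` such
that each `x ∈ Y` has a sequence `Uₙ ∈ 𝒰ₙ` of members containing it whose intersection is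
compact and for which `(⋂_{i ≤ n} Uᵢ)ₙ` is an outer base of `⋂ₙ Uₙ`. -/
def PSpace (Y : Type*) [TopologicalSpace Y] : Prop :=
  T35Space Y ∧ ∃ 𝒰 : ℕ → Set (Set Y),
    (∀ n, ∀ U ∈ 𝒰 n, IsOpen U) ∧ (∀ n, ⋃₀ 𝒰 n = Set.univ) ∧
    ∀ x : Y, ∃ U : ℕ → Set Y, (∀ n, U n ∈ 𝒰 n) ∧ (∀ n, x ∈ U n) ∧
      IsCompact (⋂ n, U n) ∧
      ∀ W : Set Y, IsOpen W → (⋂ n, U n) ⊆ W → ∃ m, (⋂ i ≤ m, U i) ⊆ W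

/-- `X` is a Namioka space: for every compact Hausdorff `K`, every separately continuous
`f : X × K → ℝ` is jointly continuous at each point of `R × K` for some dense `R ⊆ X`. -/
def NamiokaSpace (X : Type*) [TopologicalSpace X] : Prop :=
  ∀ (K : Type*) [TopologicalSpace K], CompactSpace K → T2Space K →
    ∀ f : X × K → ℝ, SeparatelyContinuous f →
      ∃ R : Set X, Dense R ∧ ∀ x ∈ R, ∀ y : K, ContinuousAt f (x, y)

/-- `A` is C-embedded in `Y`: every continuous real-valued function on `A` extends
continuously to `Y`. -/
def CEmbedded {Y : Type*} [TopologicalSpace Y] (A : Set Y) : Prop :=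
  ∀ g : A → ℝ, Continuous g → ∃ G : Y → ℝ, Continuous G ∧ ∀ a : A, G a = g a

/-- `A` is C*-embedded in `Y`: every bounded continuous real-valued function on `A`
extends continuously to `Y`. -/
def CStarEmbedded {Y : Type*} [TopologicalSpace Y] (A : Set Y) : Prop :=
  ∀ g : A → ℝ, Continuous g → (∃ M, ∀ a, |g a| ≤ M) →
    ∃ G : Y → ℝ, Continuous G ∧ ∀ a : A, G a = g a

/-- The family `F ⊆ ℝ^X` is equicontinuous at `x`. -/
def EquicontAt (F : Set (X → ℝ)) (x : X) : Prop :=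
  ∀ ε > 0, ∃ U ∈ 𝓝 x, ∀ y ∈ U, ∀ g ∈ F, |g x - g y| < ε

end SepJoint

/-! ### Auxiliary constructions for the proof -/

namespace SepJointProofAux

open SepJoint Set Filter

variable {X : Type*} [TopologicalSpace X]

/-- `U` is open and every `g ∈ K` oscillates by less than `ε` on `U`. -/
def Small (K : Set (X → ℝ)) (ε : ℝ) (U : Set X) : Prop :=
  IsOpen U ∧ ∀ y ∈ U, ∀ z ∈ U, ∀ g ∈ K, |g y - g z| < ε

open Classical in
/-- A choice of a small open set around `x`, if one exists. -/
noncomputable def pick (K : Set (X → ℝ)) (ε : ℝ) (x : X) : Set X :=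
  if h : ∃ U, Small K ε U ∧ x ∈ U then h.choose else univ

lemma pick_isOpen (K : Set (X → ℝ)) (ε : ℝ) (x : X) : IsOpen (pick K ε x) := by
  unfold pick
  split
  · next h => exact h.choose_spec.1.1
  · exact isOpen_univ

lemma mem_pick (K : Set (X → ℝ)) (ε : ℝ) (x : X) : x ∈ pick K ε x := by
  unfold pick
  split
  · next h => exact h.choose_spec.2
  · exact mem_univ x

lemma pick_small {K : Set (X → ℝ)} {ε : ℝ} {x : X} (h : ∃ U, Small K ε U ∧ x ∈ U) :
    Small K ε (pick K ε x) := by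
  unfold pick
  rw [dif_pos h]
  exact h.choose_spec.1

lemma denseOpen_biInter {ι : Type*} (s : Finset ι) (f : ι → Set X)
    (h : ∀ i ∈ s, IsOpen (f i) ∧ Dense (f i)) :
    IsOpen (⋂ i ∈ s, f i) ∧ Dense (⋂ i ∈ s, f i) := by
  classical
  induction s using Finset.induction_on with
  | empty => simp
  | @insert a s ha ih =>
    rw [Finset.set_biInter_insert]
    obtain ⟨ho, hd⟩ := h a (Finset.mem_insert_self a s)
    obtain ⟨ho2, hd2⟩ := ih fun i hi => h i (Finset.mem_insert_of_mem hi)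
    exact ⟨ho.inter ho2, hd.inter_of_isOpen_left hd2 ho⟩

/-- The dense open part used at stage `n`. -/
def WnD (D : ℕ → ℕ → Set X) (n : ℕ) (V : Set X) : Set X :=
  V ∩ ⋂ i ∈ Finset.range (n + 1), ⋂ m ∈ Finset.range (n + 1), D i m

/-- Points of `WnD` admitting small neighbourhoods for all `Kn i`, `i ≤ n`. -/
def SnD (Kn : ℕ → Set (X → ℝ)) (D : ℕ → ℕ → Set X) (n : ℕ) (V : Set X) : Set X :=
  WnD D n V ∩
    ⋂ i ∈ Finset.range (n + 1), {x | ∃ U, Small (Kn i) (1 / (n + 1)) U ∧ x ∈ U}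

open Classical in
/-- α's move at stage `n` if β just played `V`. -/
noncomputable def moveD (Kn : ℕ → Set (X → ℝ)) (D : ℕ → ℕ → Set X) (n : ℕ) (V : Set X) :
    Set X :=
  if h : (SnD Kn D n V).Nonempty then
    WnD D n V ∩ ⋂ i ∈ Finset.range (n + 1), pick (Kn i) (1 / (n + 1)) h.some
  else WnD D n V

/-- The strategy for α. -/
noncomputable def tauD (Kn : ℕ → Set (X → ℝ)) (D : ℕ → ℕ → Set X) :
    AlphaStrategyStar X :=
  fun l => moveD Kn D (l.length - 1) (l.getD (l.length - 1) ∅)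

lemma alphaMoveStar_tauD (Kn : ℕ → Set (X → ℝ)) (D : ℕ → ℕ → Set X) (V : ℕ → Set X)
    (n : ℕ) : alphaMoveStar (tauD Kn D) V n = moveD Kn D n (V n) := by
  have hlen : (hist V (n + 1)).length = n + 1 := by simp [hist]
  have hlt : n < (hist V (n + 1)).length := by rw [hlen]; exact Nat.lt_succ_self n
  have hget : (hist V (n + 1)).getD n ∅ = V n := by
    have hlt2 : n < (List.ofFn (fun i : Fin (n + 1) => V i)).length := by simp
    show (List.ofFn (fun i : Fin (n + 1) => V i)).getD n ∅ = V n
    rw [List.getD_eq_getElem _ _ hlt2, List.getElem_ofFn]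
  simp only [alphaMoveStar, tauD, hlen, Nat.succ_sub_one, hget]

lemma moveD_subset_WnD (Kn : ℕ → Set (X → ℝ)) (D : ℕ → ℕ → Set X) (n : ℕ) (V : Set X) :
    moveD Kn D n V ⊆ WnD D n V := by
  unfold moveD
  split
  · exact inter_subset_left
  · exact Set.Subset.rfl

lemma WnD_props (D : ℕ → ℕ → Set X) (hD : ∀ i m, IsOpen (D i m) ∧ Dense (D i m))
    (n : ℕ) {V : Set X} (hVo : IsOpen V) (hVne : V.Nonempty) :
    IsOpen (WnD D n V) ∧ (WnD D n V).Nonempty := by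
  have hbig : IsOpen (⋂ i ∈ Finset.range (n + 1), ⋂ m ∈ Finset.range (n + 1), D i m) ∧
      Dense (⋂ i ∈ Finset.range (n + 1), ⋂ m ∈ Finset.range (n + 1), D i m) := by
    refine denseOpen_biInter _ _ fun i _ => ?_
    exact denseOpen_biInter _ _ fun m _ => hD i m
  exact ⟨hVo.inter hbig.1, hbig.2.inter_open_nonempty V hVo hVne⟩

lemma moveD_props (Kn : ℕ → Set (X → ℝ)) (D : ℕ → ℕ → Set X)
    (hD : ∀ i m, IsOpen (D i m) ∧ Dense (D i m)) (n : ℕ) {V : Set X}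
    (hVo : IsOpen V) (hVne : V.Nonempty) :
    IsOpen (moveD Kn D n V) ∧ (moveD Kn D n V).Nonempty ∧ moveD Kn D n V ⊆ V := by
  obtain ⟨hWo, hWne⟩ := WnD_props D hD n hVo hVne
  have hsub : moveD Kn D n V ⊆ V :=
    (moveD_subset_WnD Kn D n V).trans inter_subset_left
  refine ⟨?_, ?_, hsub⟩ <;> unfold moveD <;> split
  · next h =>
    exact hWo.inter (isOpen_biInter_finset fun i _ => pick_isOpen _ _ _)
  · exact hWo
  · next h =>
    exact ⟨h.some, h.some_mem.1, mem_iInter₂.2 fun i _ => mem_pick _ _ _⟩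
  · exact hWne

end SepJointProofAux

open SepJointProofAux in
open SepJoint in
/-- if each family `Kₙ` is equicontinuous at every point of a residual set,
then `X` is conditionally σ*_{C(X_Γ)}-α-favorable for `Γ = ⋃ₙ Kₙ`, and in particular
conditionally σ*_Γ-α-favorable. -/
theorem condSigmaStarAlphaFavorable_of_equicontinuous_residual
    {X : Type*} [TopologicalSpace X] (Kn : ℕ → Set (X → ℝ))
    (hres : ∀ n, {x : X | EquicontAt (Kn n) x} ∈ residual X) :
    CondSigmaStarAlphaFavorable X
      {h : X → ℝ |
        @Continuous X ℝ
          (⨅ g ∈ ⋃ n, Kn n, TopologicalSpace.induced g inferInstance) _ h} ∧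
    CondSigmaStarAlphaFavorable X (⋃ n, Kn n) := by
  classical
  have hDx : ∀ i : ℕ, ∃ Di : ℕ → Set X, (∀ m, IsOpen (Di m) ∧ Dense (Di m)) ∧
      (⋂ m, Di m) ⊆ {x : X | EquicontAt (Kn i) x} := by
    intro i
    obtain ⟨S, hSo, hSd, hSc, hSsub⟩ := mem_residual_iff.mp (hres i)
    have hne : (insert (univ : Set X) S).Nonempty := Set.insert_nonempty _ _
    obtain ⟨f, hf⟩ := ((hSc.insert univ)).exists_eq_range hne
    refine ⟨f, fun m => ?_, fun x hx => ?_⟩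
    · have hm : f m ∈ insert (univ : Set X) S := hf ▸ Set.mem_range_self m
      rcases hm with h | h
      · rw [h]; exact ⟨isOpen_univ, dense_univ⟩
      · exact ⟨hSo _ h, hSd _ h⟩
    · refine hSsub fun t ht => ?_
      have h2 : t ∈ Set.range f := hf ▸ Set.mem_insert_of_mem _ ht
      obtain ⟨m, rfl⟩ := h2
      exact Set.mem_iInter.mp hx m
  choose D hDod hDsub using hDx
  have hD : ∀ i m, IsOpen (D i m) ∧ Dense (D i m) := fun i m => hDod i m
  set τ : AlphaStrategyStar X := tauD Kn D with hτ
  have hlegal : AlphaStratLegalStar τ := by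
    intro V n h0 hprev
    rw [hτ, alphaMoveStar_tauD]
    have hVn : IsOpen (V n) ∧ (V n).Nonempty := by
      cases n with
      | zero => exact h0
      | succ k =>
        obtain ⟨ho, hne, -⟩ := hprev k (Nat.lt_succ_self k)
        exact ⟨ho, hne⟩
    exact moveD_props Kn D hD n hVn.1 hVn.2
  have hwin : ∀ V, BetaLegalRunStar τ V → (⋂ n, alphaMoveStar τ V n).Nonempty →
      AlphaWinsStar {h : X → ℝ |
        @Continuous X ℝ
          (⨅ g ∈ ⋃ n, Kn n, TopologicalSpace.induced g inferInstance) _ h}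
        (fun n => alphaMoveStar τ V n) := by
    intro V hrun hne a ha h hh
    obtain ⟨t, ht⟩ := hne
    have htU : ∀ n, t ∈ moveD Kn D n (V n) := by
      intro n
      have h1 := Set.mem_iInter.mp ht n
      rwa [hτ, alphaMoveStar_tauD] at h1
    have htW : ∀ n, t ∈ WnD D n (V n) := fun n => moveD_subset_WnD Kn D n (V n) (htU n)
    have htD : ∀ i m, t ∈ D i m := by
      intro i m
      have hk := (htW (max i m)).2
      have hi : i ∈ Finset.range (max i m + 1) :=
        Finset.mem_range.mpr (Nat.lt_succ_of_le (le_max_left i m))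
      have hm : m ∈ Finset.range (max i m + 1) :=
        Finset.mem_range.mpr (Nat.lt_succ_of_le (le_max_right i m))
      exact Set.mem_iInter₂.mp (Set.mem_iInter₂.mp hk i hi) m hm
    have htA : ∀ i, EquicontAt (Kn i) t := fun i =>
      hDsub i (Set.mem_iInter.mpr fun m => htD i m)
    have htOsc : ∀ i n : ℕ, ∃ U, Small (Kn i) (1 / (n + 1) : ℝ) U ∧ t ∈ U := by
      intro i n
      have hε : (0 : ℝ) < 1 / ((n : ℝ) + 1) / 2 := by positivity
      obtain ⟨U', hU'nhds, hU'⟩ := htA i (1 / ((n : ℝ) + 1) / 2) hε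
      refine ⟨interior U', ⟨isOpen_interior, ?_⟩, mem_interior_iff_mem_nhds.mpr hU'nhds⟩
      intro y hy z hz g hg
      have h1 := hU' y (interior_subset hy) g hg
      have h2 := hU' z (interior_subset hz) g hg
      have h3 : |g y - g z| ≤ |g t - g y| + |g t - g z| := by
        have : g y - g z = -(g t - g y) + (g t - g z) := by ring
        rw [this]
        exact (abs_add_le _ _).trans (by rw [abs_neg])
      linarith
    have htS : ∀ n, t ∈ SnD Kn D n (V n) := fun n =>
      ⟨htW n, Set.mem_iInter₂.mpr fun i _ => htOsc i n⟩
    have hkey : ∀ i n : ℕ, i ≤ n → ∀ g ∈ Kn i, ∀ y ∈ moveD Kn D n (V n),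
        |g t - g y| < 1 / (n + 1) := by
      intro i n hin g hg y hy
      have hSne : (SnD Kn D n (V n)).Nonempty := ⟨t, htS n⟩
      have hmv : moveD Kn D n (V n) =
          WnD D n (V n) ∩
            ⋂ j ∈ Finset.range (n + 1), pick (Kn j) (1 / (n + 1)) hSne.some := by
        unfold SepJointProofAux.moveD
        rw [dif_pos hSne]
      have hiR : i ∈ Finset.range (n + 1) := Finset.mem_range.mpr (Nat.lt_succ_of_le hin)
      have hx : hSne.some ∈ SnD Kn D n (V n) := hSne.some_mem
      have hxe : ∃ U, Small (Kn i) (1 / (n + 1) : ℝ) U ∧ hSne.some ∈ U :=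
        Set.mem_iInter₂.mp hx.2 i hiR
      have hsm : Small (Kn i) (1 / (n + 1) : ℝ) (pick (Kn i) (1 / (n + 1)) hSne.some) :=
        pick_small hxe
      have hty : t ∈ pick (Kn i) (1 / (n + 1)) hSne.some := by
        have h1 := htU n
        rw [hmv] at h1
        exact Set.mem_iInter₂.mp h1.2 i hiR
      have hyy : y ∈ pick (Kn i) (1 / (n + 1)) hSne.some := by
        rw [hmv] at hy
        exact Set.mem_iInter₂.mp hy.2 i hiR
      exact hsm.2 t hty y hyy g hg
    have haU : ∀ n, a n ∈ moveD Kn D n (V n) := by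
      intro n
      have h1 := ha n
      simp only [hτ, alphaMoveStar_tauD] at h1
      exact h1
    have hconv : ∀ g ∈ ⋃ n, Kn n, Tendsto (fun n => g (a n)) atTop (𝓝 (g t)) := by
      intro g hg
      obtain ⟨i, hgi⟩ := Set.mem_iUnion.mp hg
      rw [tendsto_iff_dist_tendsto_zero]
      refine squeeze_zero' (Eventually.of_forall fun n => dist_nonneg) ?_
        tendsto_one_div_add_atTop_nhds_zero_nat
      filter_upwards [eventually_ge_atTop i] with n hn
      have h1 := hkey i n hn g hgi (a n) (haU n)
      rw [Real.dist_eq, abs_sub_comm]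
      exact le_of_lt h1
    have haw : Tendsto a atTop
        (@nhds X (⨅ g ∈ ⋃ n, Kn n, TopologicalSpace.induced g inferInstance) t) := by
      rw [_root_.nhds_iInf, tendsto_iInf]
      intro g
      rw [_root_.nhds_iInf, tendsto_iInf]
      intro hg
      rw [_root_.nhds_induced, tendsto_comap_iff]
      exact hconv g hg
    have htend : Tendsto (fun n => h (a n)) atTop (𝓝 (h t)) :=
      Tendsto.comp
        (@Continuous.tendsto X ℝ
          (⨅ g ∈ ⋃ n, Kn n, TopologicalSpace.induced g inferInstance) _ h hh t) haw
    exact ⟨t, ht, mem_closure_of_tendsto htend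
      (Eventually.of_forall fun n => Set.mem_range_self n)⟩
  have main : CondAlphaWinningStar
      {h : X → ℝ |
        @Continuous X ℝ
          (⨅ g ∈ ⋃ n, Kn n, TopologicalSpace.induced g inferInstance) _ h} τ :=
    ⟨hlegal, hwin⟩
  have hsub : (⋃ n, Kn n) ⊆ {h : X → ℝ |
      @Continuous X ℝ
        (⨅ g ∈ ⋃ n, Kn n, TopologicalSpace.induced g inferInstance) _ h} := by
    intro g hg
    exact continuous_iff_le_induced.mpr (iInf₂_le g hg)
  exact ⟨⟨τ, main⟩, ⟨τ, main.1, fun V hV hne b hb g hg =>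
    main.2 V hV hne b hb g (hsub hg)⟩⟩
end

section
/- Let X and K be topological spaces, f : X × K → ℝ a separately continuous map, and φ : K → C_p(X) the continuous map defined by φ(y)(x) = f(x,y). Suppose there exist a set Γ ⊆ ℝ^X and a sequence (𝒰ₙ)ₙ of countable covers of K such that X is σ_Γ-β-defavorable and the sequence (𝒰ₙ)ₙ is countably pair complete with respect to (φ,Γ). Then for every ε > 0 there is a residual subset R_ε of X such that for every (x,y) ∈ R_ε × K there exist a finite sequence of sets Fᵢ ∈ 𝒰ᵢ, i = 0,…,k, with y ∈ ⋂_{i≤k} Fᵢ, and a neighborhood O of (x,y) in X × K such that |f(x,y) − f(x',y')| < ε for every (x',y') ∈ O ∩ (X × ⋂_{i≤k} Fᵢ). -/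
open Set Topology Filter

/-!
Call `x` bad if the conclusion fails at `(x, y)` for some `y`. If the bad points were not meagre,
β would win `𝒥_Γ`. By the Banach category theorem β can answer α's move `Uₙ` with an open
`Vₙ₊₁ ⊆ Uₙ` in which the bad points with witness `y` in a fixed cylinder `⋂_{i ≤ n} 𝒰ᵢ(cᵢ)`
are everywhere non-meagre. Badness of one such point `(x₀, yₙ)` gives `zₙ` in the same cylinder
with `|f(x, yₙ) - f(x, zₙ)| ≥ ε/2` on a smaller `Vₙ₊₁`, and continuity in `y` lets `zₙ` keep
`|f(aₘ, yₙ) - f(aₘ, zₙ)| ≤ ε/4` at α's points `aₘ`, `m ≤ n`. A cluster point `g ∈ Γ` of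
`φ(yₙ) - φ(zₙ)` then has `|g| ≥ ε/2` on `⋂ₙ Uₙ` but `|g| ≤ ε/4` on the closure of
`{g(aₙ)}`, so α loses.
-/

namespace SepJoint

section Meagre

variable {X : Type*} [TopologicalSpace X]

def EverywhereNonMeagreIn (C V : Set X) : Prop :=
  ∀ U, IsOpen U → U.Nonempty → U ⊆ V → ¬IsMeagre (C ∩ U)

lemma EverywhereNonMeagreIn.mono {C V W : Set X} (h : EverywhereNonMeagreIn C W) (hVW : V ⊆ W) :
    EverywhereNonMeagreIn C V :=
  fun U hU hUne hUV => h U hU hUne (hUV.trans hVW)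

lemma exists_seq_isOpen_dense_of_mem_residual {s : Set X} (hs : s ∈ residual X) :
    ∃ O : ℕ → Set X, (∀ n, IsOpen (O n)) ∧ (∀ n, Dense (O n)) ∧ ⋂ n, O n ⊆ s := by
  obtain ⟨S, hSo, hSd, hSc, hSs⟩ := mem_residual_iff.1 hs
  obtain ⟨O, hO⟩ := (hSc.insert univ).exists_eq_range (insert_nonempty _ _)
  have hmem : ∀ n, O n = univ ∨ O n ∈ S := fun n => by
    rw [← mem_insert_iff, hO]
    exact mem_range_self n
  refine ⟨O, fun n => ?_, fun n => ?_, ?_⟩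
  · rcases hmem n with h | h
    · exact h ▸ isOpen_univ
    · exact hSo _ h
  · rcases hmem n with h | h
    · exact h ▸ dense_univ
    · exact hSd _ h
  · rw [← sInter_range, ← hO, sInter_insert, univ_inter]
    exact hSs

/-- The dense open sets witnessing meagreness on the members are glued index by index; by
disjointness a point of the glued sets lies in a single member. -/
lemma isMeagre_inter_closure_sUnion {C : Set X} {𝒟 : Set (Set X)} (hopen : ∀ U ∈ 𝒟, IsOpen U)
    (hdisj : 𝒟.PairwiseDisjoint id) (hmeagre : ∀ U ∈ 𝒟, IsMeagre (C ∩ U)) :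
    IsMeagre (C ∩ closure (⋃₀ 𝒟)) := by
  choose! O hOo hOd hOsub using fun U (hU : U ∈ 𝒟) =>
    exists_seq_isOpen_dense_of_mem_residual (hmeagre U hU)
  set D := ⋃₀ 𝒟
  set G : ℕ → Set X := fun n => (⋃ U ∈ 𝒟, O U n ∩ U) ∪ (closure D)ᶜ
  have hGo : ∀ n, IsOpen (G n) := fun n =>
    (isOpen_biUnion fun U hU => (hOo U hU n).inter (hopen U hU)).union
      isClosed_closure.isOpen_compl
  have hGd : ∀ n, Dense (G n) := by
    intro n x
    by_cases hx : x ∈ closure D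
    · refine closure_minimal (sUnion_subset fun U hU => ?_) isClosed_closure hx
      refine ((hOd U hU n).open_subset_closure_inter (hopen U hU)).trans (closure_mono ?_)
      exact fun y ⟨hyU, hyO⟩ => Or.inl (mem_iUnion₂.2 ⟨U, hU, hyO, hyU⟩)
    · exact subset_closure (Or.inr hx)
  have hG : ∀ {x n}, x ∈ G n → x ∈ closure D → ∃ U ∈ 𝒟, x ∈ O U n ∧ x ∈ U := by
    rintro x n (hx | hx) hxD
    · simpa only [mem_iUnion₂, exists_prop, mem_inter_iff] using hx
    · exact absurd hxD hx
  refine mem_of_superset (countable_iInter_mem.2 fun n => residual_of_dense_open (hGo n) (hGd n)) ?_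
  rintro x hxG ⟨hxC, hxD⟩
  obtain ⟨U, hU, -, hxU⟩ := hG (mem_iInter.1 hxG 0) hxD
  refine hOsub U hU (mem_iInter.2 fun n => ?_) ⟨hxC, hxU⟩
  obtain ⟨U', hU', hxO, hxU'⟩ := hG (mem_iInter.1 hxG n) hxD
  rwa [hdisj.elim hU' hU (not_disjoint_iff.2 ⟨x, hxU', hxU⟩)] at hxO

lemma exists_maximal_pairwiseDisjoint_subset {α : Type*} (𝒮 : Set (Set α)) :
    ∃ 𝒟 ⊆ 𝒮, 𝒟.PairwiseDisjoint id ∧ ∀ U ∈ 𝒮, Disjoint U (⋃₀ 𝒟) → U ∈ 𝒟 := by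
  obtain ⟨𝒟, h𝒟⟩ := zorn_subset {𝒟 | 𝒟 ⊆ 𝒮 ∧ 𝒟.PairwiseDisjoint id} fun c hc hchain =>
    ⟨⋃₀ c, ⟨sUnion_subset fun d hd => (hc hd).1,
      (hchain.pairwiseDisjoint_sUnion id).2 fun d hd => (hc hd).2⟩,
      fun _ hd => subset_sUnion_of_mem hd⟩
  refine ⟨𝒟, h𝒟.prop.1, h𝒟.prop.2, fun U hU hdisj => ?_⟩
  have hins : insert U 𝒟 ∈ {𝒟 | 𝒟 ⊆ 𝒮 ∧ 𝒟.PairwiseDisjoint id} :=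
    ⟨insert_subset hU h𝒟.prop.1,
      h𝒟.prop.2.insert fun V hV _ => hdisj.mono_right (subset_sUnion_of_mem hV)⟩
  exact h𝒟.2 hins (subset_insert _ _) (mem_insert _ _)

/-- The Banach category theorem, via a maximal disjoint subfamily. -/
theorem isMeagre_inter_closure_sUnion_locallyMeagre (C : Set X) :
    IsMeagre (C ∩ closure (⋃₀ {U | IsOpen U ∧ IsMeagre (C ∩ U)})) := by
  obtain ⟨𝒟, h𝒟, hdisj, hmax⟩ :=
    exists_maximal_pairwiseDisjoint_subset {U : Set X | IsOpen U ∧ IsMeagre (C ∩ U)}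
  have hcover : ⋃₀ {U | IsOpen U ∧ IsMeagre (C ∩ U)} ⊆ closure (⋃₀ 𝒟) := by
    rintro x ⟨U, ⟨hUo, hUm⟩, hxU⟩
    by_contra hx
    have hU' : U \ closure (⋃₀ 𝒟) ∈ 𝒟 :=
      hmax _ ⟨hUo.sdiff isClosed_closure, hUm.mono (inter_subset_inter_right _ sdiff_subset)⟩
        (disjoint_sdiff_left.mono_right subset_closure)
    exact hx (subset_closure (subset_sUnion_of_mem hU' ⟨hxU, hx⟩))
  exact (isMeagre_inter_closure_sUnion (fun U hU => (h𝒟 hU).1) hdisj fun U hU => (h𝒟 hU).2).mono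
    (inter_subset_inter_right _ (closure_minimal hcover isClosed_closure))

lemma exists_isOpen_subset_everywhereNonMeagreIn {C U : Set X} (hU : IsOpen U)
    (hCU : ¬IsMeagre (C ∩ U)) :
    ∃ V ⊆ U, IsOpen V ∧ V.Nonempty ∧ EverywhereNonMeagreIn C V := by
  set L := ⋃₀ {W : Set X | IsOpen W ∧ IsMeagre (C ∩ W)}
  refine ⟨U \ closure L, sdiff_subset, hU.sdiff isClosed_closure, ?_, ?_⟩
  · rw [nonempty_iff_ne_empty, Ne, sdiff_eq_empty]
    exact fun h => hCU ((isMeagre_inter_closure_sUnion_locallyMeagre C).mono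
      (inter_subset_inter_right _ h))
  · rintro W hWo ⟨x, hx⟩ hWV hWm
    exact (hWV hx).2 (subset_closure ⟨W, ⟨hWo, hWm⟩, hx⟩)

end Meagre

section Game

variable {X : Type*} [TopologicalSpace X]

lemma hist_succ {A : Type*} (g : ℕ → A) (n : ℕ) : hist g (n + 1) = hist g n ++ [g n] := by
  rw [hist, hist, List.ofFn_succ', List.concat_eq_append]
  rfl

/-- β plays `V s` for a remembered state `s`, which it updates along `Step` after each move of
α. -/
theorem exists_betaLegal_following {S : Type*} (V : S → Set X) (Inv : S → Prop)
    (Step : S → X → S → Prop) (hV : ∀ s, Inv s → IsOpen (V s) ∧ (V s).Nonempty)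
    {s₀ : S} (h₀ : Inv s₀)
    (hstep : ∀ s, Inv s → ∀ U, IsOpen U → U.Nonempty → U ⊆ V s → ∀ a,
      ∃ s', Inv s' ∧ V s' ⊆ U ∧ Step s a s') :
    ∃ σ : BetaStrategy X, BetaLegal σ ∧ ∀ U a, (∀ n, AlphaLegal σ U a n) →
      ∃ s : ℕ → S, s 0 = s₀ ∧ ∀ n, U n ⊆ V (s n) ∧ Step (s n) (a n) (s (n + 1)) := by
  have hnext : ∀ (s : S) (p : Set X × X), ∃ s', Inv s ∧ IsOpen p.1 ∧ p.1.Nonempty ∧ p.1 ⊆ V s →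
      Inv s' ∧ V s' ⊆ p.1 ∧ Step s p.2 s' := by
    intro s p
    by_cases h : Inv s ∧ IsOpen p.1 ∧ p.1.Nonempty ∧ p.1 ⊆ V s
    · obtain ⟨s', hs'⟩ := hstep s h.1 p.1 h.2.1 h.2.2.1 h.2.2.2 p.2
      exact ⟨s', fun _ => hs'⟩
    · exact ⟨s, fun h' => absurd h' h⟩
  choose next hnext using hnext
  set run : (ℕ → Set X) → (ℕ → X) → ℕ → S :=
    fun U a n => (hist (fun j => (U j, a j)) n).foldl next s₀ with hrun
  set σ : BetaStrategy X := fun h => V (h.foldl next s₀)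
  have hsucc : ∀ U a n, AlphaLegal σ U a (n + 1) → Inv (run U a n) →
      Inv (run U a (n + 1)) ∧ V (run U a (n + 1)) ⊆ U n ∧
        Step (run U a n) (a n) (run U a (n + 1)) := by
    intro U a n hA hn
    simp only [hrun, hist_succ, List.foldl_append, List.foldl_cons, List.foldl_nil]
    exact hnext _ _ ⟨hn, hA n n.lt_succ_self⟩
  have hinv : ∀ U a n, AlphaLegal σ U a n → Inv (run U a n) := by
    intro U a n
    induction n with
    | zero => exact fun _ => h₀
    | succ n ih => exact fun hA => (hsucc U a n hA (ih fun i hi => hA i (by omega))).1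
  refine ⟨σ, fun U a n hA => ⟨(hV _ (hinv U a n hA)).1, (hV _ (hinv U a n hA)).2, ?_⟩,
    fun U a hA => ⟨run U a, rfl, fun n => ⟨(hA (n + 1) n n.lt_succ_self).2.2, ?_⟩⟩⟩
  · rintro m rfl
    exact (hsucc U a m hA (hinv U a m fun i hi => hA i (by omega))).2.1
  · exact (hsucc U a n (hA (n + 1)) (hinv U a n (hA n))).2.2

end Game

lemma not_alphaWinsGamma_of_separated {X K : Type*} {f : X × K → ℝ} {Γ : Set (X → ℝ)}
    {W : ℕ → Set K} (hpc : PairComplete f Γ W) {y z : ℕ → K} (hy : ∀ n, y n ∈ W n)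
    (hz : ∀ n, z n ∈ W n) {U : ℕ → Set X} {a : ℕ → X} {δ η : ℝ} (hδη : δ < η)
    (hU : ∀ t ∈ ⋂ n, U n, ∀ n, η ≤ |f (t, y n) - f (t, z n)|)
    (ha : ∀ k, ∀ᶠ n in atTop, |f (a k, y n) - f (a k, z n)| ≤ δ) :
    ¬AlphaWinsGamma Γ U a := by
  intro hwin
  obtain ⟨g, hgΓ, hg⟩ := hpc y z hy hz
  obtain ⟨t, ht, htcl⟩ := hwin g hgΓ
  have hclust : ∀ x, MapClusterPt (g x) atTop fun n => f (x, y n) - f (x, z n) :=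
    fun x => hg.continuousAt_comp (continuous_apply x).continuousAt
  have hgt : η ≤ |g t| := (isClosed_le continuous_const continuous_abs).mem_of_mapClusterPt
    (hclust t) (Eventually.of_forall (hU t ht))
  have hga : ∀ k, |g (a k)| ≤ δ := fun k =>
    (isClosed_le continuous_abs continuous_const).mem_of_mapClusterPt (hclust (a k)) (ha k)
  have : |g t| ≤ δ :=
    closure_minimal (range_subset_iff.2 hga) (isClosed_le continuous_abs continuous_const) htcl
  linarith

section Cover

variable {X K : Type*} [TopologicalSpace X] [TopologicalSpace K]

def EpsContAlongCovers (f : X × K → ℝ) (𝒰 : ℕ → ℕ → Set K) (ε : ℝ) (p : X × K) : Prop :=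
  ∃ (k : ℕ) (c : ℕ → ℕ), p.2 ∈ (⋂ i ≤ k, 𝒰 i (c i)) ∧
    ∃ O ∈ 𝓝 p, ∀ q ∈ O, q.2 ∈ (⋂ i ≤ k, 𝒰 i (c i)) → |f p - f q| < ε

def badSet (f : X × K → ℝ) (𝒰 : ℕ → ℕ → Set K) (ε : ℝ) (c : ℕ → ℕ) (n : ℕ) : Set X :=
  {x | ∃ y, (∀ i < n, y ∈ 𝒰 i (c i)) ∧ ¬EpsContAlongCovers f 𝒰 ε (x, y)}

lemma exists_far_of_not_epsContAlongCovers {f : X × K → ℝ} {𝒰 : ℕ → ℕ → Set K} {ε : ℝ}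
    {p : X × K} (h : ¬EpsContAlongCovers f 𝒰 ε p) {n : ℕ} {c : ℕ → ℕ}
    (hp : ∀ i < n + 1, p.2 ∈ 𝒰 i (c i)) :
    ∀ O ∈ 𝓝 p, ∃ q ∈ O, q.2 ∈ (⋂ i ≤ n, 𝒰 i (c i)) ∧ ε ≤ |f p - f q| := by
  intro O hO
  by_contra! hnear
  exact h ⟨n, c, mem_iInter₂.2 fun i hi => hp i (Nat.lt_succ_of_le hi), O, hO, hnear⟩

lemma badSet_subset_iUnion {f : X × K → ℝ} {𝒰 : ℕ → ℕ → Set K} {ε : ℝ}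
    (hcover : ∀ n, (⋃ k, 𝒰 n k) = univ) (c : ℕ → ℕ) (n : ℕ) :
    badSet f 𝒰 ε c n ⊆ ⋃ k, badSet f 𝒰 ε (Function.update c n k) (n + 1) := by
  rintro x ⟨y, hy, hbad⟩
  obtain ⟨k, hk⟩ := mem_iUnion.1 (hcover n ▸ mem_univ y)
  refine mem_iUnion.2 ⟨k, y, fun i hi => ?_, hbad⟩
  rcases Nat.lt_succ_iff_lt_or_eq.1 hi with hi | rfl
  · rw [Function.update_of_ne hi.ne]
    exact hy i hi
  · rwa [Function.update_self]

lemma exists_isOpen_oscillation {f : X × K → ℝ} (hf : SeparatelyContinuous f) {ε : ℝ}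
    (hε : 0 < ε) {V : Set X} (hV : IsOpen V) {x₀ : X} (hx₀ : x₀ ∈ V) {y₀ : K} {W : Set K}
    (hfar : ∀ O ∈ 𝓝 (x₀, y₀), ∃ q ∈ O, q.2 ∈ W ∧ ε ≤ |f (x₀, y₀) - f q|) (F : List X) :
    ∃ z ∈ W, ∃ V' ⊆ V, IsOpen V' ∧ V'.Nonempty ∧
      (∀ x ∈ V', ε / 2 ≤ |f (x, y₀) - f (x, z)|) ∧ ∀ b ∈ F, |f (b, y₀) - f (b, z)| ≤ ε / 4 := by
  have hopenX : ∀ y x', IsOpen {x | |f (x, y) - f (x', y)| < ε / 4} := fun y _ =>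
    isOpen_lt ((hf.2 y).sub continuous_const).abs continuous_const
  have hself : ∀ r : ℝ, |r - r| < ε / 4 := fun r => by rw [sub_self, abs_zero]; positivity
  set O₁ := V ∩ {x | |f (x, y₀) - f (x₀, y₀)| < ε / 4}
  set O₂ := ⋂ b ∈ {b | b ∈ F}, {y | |f (b, y) - f (b, y₀)| < ε / 4}
  have hO₂ : O₂ ∈ 𝓝 y₀ := (F.finite_toSet.isOpen_biInter fun b _ =>
    isOpen_lt ((hf.1 b).sub continuous_const).abs continuous_const).mem_nhds
      (mem_iInter₂.2 fun _ _ => hself _)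
  obtain ⟨⟨x₁, z⟩, ⟨hx₁, hz⟩, hzW, hfar⟩ :=
    hfar _ (prod_mem_nhds ((hV.inter (hopenX y₀ x₀)).mem_nhds ⟨hx₀, hself _⟩) hO₂)
  refine ⟨z, hzW, O₁ ∩ {x | |f (x, z) - f (x₁, z)| < ε / 4},
    inter_subset_left.trans inter_subset_left, (hV.inter (hopenX y₀ x₀)).inter (hopenX z x₁),
    ⟨x₁, hx₁, hself _⟩, ?_, fun b hb => ?_⟩
  · rintro x ⟨⟨-, hx⟩, hxz⟩
    have h₁ := abs_sub_le (f (x₀, y₀)) (f (x, y₀)) (f (x₁, z))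
    have h₂ := abs_sub_le (f (x, y₀)) (f (x, z)) (f (x₁, z))
    rw [mem_ofPred_eq, abs_sub_comm] at hx
    rw [mem_ofPred_eq] at hxz
    linarith
  · rw [abs_sub_comm]
    exact (mem_iInter₂.1 hz b hb).le

end Cover

/-- `c` and `depth` encode the cylinder `⋂_{i < depth} 𝒰ᵢ(cᵢ)` reached so far; `pts` are α's
points. -/
structure BetaMemory (X : Type*) where
  V : Set X
  c : ℕ → ℕ
  depth : ℕ
  pts : List X

namespace BetaMemory

section Run

variable {X K : Type*}

def IsNext (f : X × K → ℝ) (𝒰 : ℕ → ℕ → Set K) (ε : ℝ) (m : BetaMemory X) (a : X)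
    (m' : BetaMemory X) : Prop :=
  m'.depth = m.depth + 1 ∧ (∀ i < m.depth, m'.c i = m.c i) ∧ m'.pts = a :: m.pts ∧
    ∃ y ∈ ⋂ i ≤ m.depth, 𝒰 i (m'.c i), ∃ z ∈ ⋂ i ≤ m.depth, 𝒰 i (m'.c i),
      (∀ x ∈ m'.V, ε / 2 ≤ |f (x, y) - f (x, z)|) ∧ ∀ b ∈ m'.pts, |f (b, y) - f (b, z)| ≤ ε / 4

variable {f : X × K → ℝ} {𝒰 : ℕ → ℕ → Set K} {ε : ℝ} {m : ℕ → BetaMemory X} {a : ℕ → X}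

lemma depth_eq (hm : ∀ n, (m n).IsNext f 𝒰 ε (a n) (m (n + 1))) (h0 : (m 0).depth = 0)
    (n : ℕ) : (m n).depth = n := by
  induction n with
  | zero => exact h0
  | succ n ih => rw [(hm n).1, ih]

lemma c_eq (hm : ∀ n, (m n).IsNext f 𝒰 ε (a n) (m (n + 1))) (h0 : (m 0).depth = 0)
    {i n : ℕ} (hi : i < n) : (m n).c i = (m (i + 1)).c i := by
  induction n with
  | zero => omega
  | succ n ih =>
    rcases Nat.lt_succ_iff_lt_or_eq.1 hi with hi | rfl
    · rw [(hm n).2.1 i (by rwa [depth_eq hm h0]), ih hi]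
    · rfl

lemma mem_pts (hm : ∀ n, (m n).IsNext f 𝒰 ε (a n) (m (n + 1))) {k n : ℕ} (hk : k < n) :
    a k ∈ (m n).pts := by
  induction n with
  | zero => omega
  | succ n ih =>
    rw [(hm n).2.2.1]
    rcases Nat.lt_succ_iff_lt_or_eq.1 hk with hk | rfl
    · exact List.mem_cons_of_mem _ (ih hk)
    · exact List.mem_cons_self

lemma not_alphaWinsGamma {Γ : Set (X → ℝ)}
    (hpc : ∀ c : ℕ → ℕ, PairComplete f Γ (fun n => ⋂ i ≤ n, 𝒰 i (c i))) (hε : 0 < ε)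
    (hm : ∀ n, (m n).IsNext f 𝒰 ε (a n) (m (n + 1))) (h0 : (m 0).depth = 0)
    {U : ℕ → Set X} (hU : ∀ n, U n ⊆ (m n).V) : ¬AlphaWinsGamma Γ U a := by
  choose y hy z hz hosc hpts using fun n => (hm n).2.2.2
  have hW : ∀ n, ⋂ i ≤ (m n).depth, 𝒰 i ((m (n + 1)).c i) = ⋂ i ≤ n, 𝒰 i ((m (i + 1)).c i) :=
    fun n => by
      rw [depth_eq hm h0]
      exact iInter₂_congr fun i hi => by rw [c_eq hm h0 (Nat.lt_succ_of_le hi)]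
  refine not_alphaWinsGamma_of_separated (hpc fun i => (m (i + 1)).c i)
    (fun n => hW n ▸ hy n) (fun n => hW n ▸ hz n) (by linarith : ε / 4 < ε / 2)
    (fun t ht n => hosc n t (hU (n + 1) (mem_iInter.1 ht (n + 1)))) fun k => ?_
  filter_upwards [eventually_ge_atTop k] with n hn
  exact hpts n (a k) (mem_pts hm (Nat.lt_succ_of_le hn))

end Run

section Step

variable {X K : Type*} [TopologicalSpace X] [TopologicalSpace K]

def Admissible (f : X × K → ℝ) (𝒰 : ℕ → ℕ → Set K) (ε : ℝ) (m : BetaMemory X) : Prop :=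
  IsOpen m.V ∧ m.V.Nonempty ∧ EverywhereNonMeagreIn (badSet f 𝒰 ε m.c m.depth) m.V

lemma exists_isNext {f : X × K → ℝ} (hf : SeparatelyContinuous f) {𝒰 : ℕ → ℕ → Set K}
    (hcover : ∀ n, (⋃ k, 𝒰 n k) = univ) {ε : ℝ} (hε : 0 < ε) {m : BetaMemory X}
    (hm : m.Admissible f 𝒰 ε) {U : Set X} (hU : IsOpen U) (hUne : U.Nonempty) (hUV : U ⊆ m.V)
    (a : X) : ∃ m', m'.Admissible f 𝒰 ε ∧ m'.V ⊆ U ∧ m.IsNext f 𝒰 ε a m' := by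
  obtain ⟨k, hk⟩ : ∃ k,
      ¬IsMeagre (badSet f 𝒰 ε (Function.update m.c m.depth k) (m.depth + 1) ∩ U) := by
    by_contra! h
    refine hm.2.2 U hU hUne hUV ((isMeagre_iUnion h).mono ?_)
    rw [← iUnion_inter]
    exact inter_subset_inter_left U (badSet_subset_iUnion hcover m.c m.depth)
  obtain ⟨V₁, hV₁U, hV₁, hV₁ne, hV₁bad⟩ := exists_isOpen_subset_everywhereNonMeagreIn hU hk
  obtain ⟨x₀, ⟨y₀, hy₀, hbad⟩, hx₀⟩ := nonempty_of_not_isMeagre (hV₁bad V₁ hV₁ hV₁ne subset_rfl)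
  obtain ⟨z, hz, V', hV'V₁, hV', hV'ne, hosc, hpts⟩ := exists_isOpen_oscillation hf hε hV₁ hx₀
    (exists_far_of_not_epsContAlongCovers hbad hy₀) (a :: m.pts)
  exact ⟨⟨V', Function.update m.c m.depth k, m.depth + 1, a :: m.pts⟩,
    ⟨hV', hV'ne, hV₁bad.mono hV'V₁⟩, hV'V₁.trans hV₁U, rfl,
    fun i hi => Function.update_of_ne hi.ne _ _, rfl,
    y₀, mem_iInter₂.2 fun i hi => hy₀ i (Nat.lt_succ_of_le hi), z, hz, hosc, hpts⟩

end Step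

end BetaMemory

theorem isMeagre_setOf_not_epsContAlongCovers {X K : Type*} [TopologicalSpace X]
    [TopologicalSpace K] {f : X × K → ℝ} (hf : SeparatelyContinuous f) {Γ : Set (X → ℝ)}
    {𝒰 : ℕ → ℕ → Set K} (hcover : ∀ n, (⋃ k, 𝒰 n k) = univ)
    (hX : SigmaGammaBetaDefavorable X Γ)
    (hpc : ∀ c : ℕ → ℕ, PairComplete f Γ (fun n => ⋂ i ≤ n, 𝒰 i (c i))) {ε : ℝ} (hε : 0 < ε) :
    IsMeagre {x | ∃ y, ¬EpsContAlongCovers f 𝒰 ε (x, y)} := by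
  by_contra hB
  have hB₀ : ¬IsMeagre (badSet f 𝒰 ε id 0 ∩ univ) := by
    refine fun h => hB (h.mono ?_)
    rintro x ⟨y, hy⟩
    exact ⟨⟨y, fun i hi => absurd hi i.not_lt_zero, hy⟩, mem_univ x⟩
  obtain ⟨V₀, -, hV₀, hV₀ne, hV₀bad⟩ := exists_isOpen_subset_everywhereNonMeagreIn isOpen_univ hB₀
  obtain ⟨σ, hσ, hrun⟩ := exists_betaLegal_following BetaMemory.V
    (BetaMemory.Admissible f 𝒰 ε) (BetaMemory.IsNext f 𝒰 ε) (fun _ hm => ⟨hm.1, hm.2.1⟩)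
    (s₀ := BetaMemory.mk V₀ id 0 []) ⟨hV₀, hV₀ne, hV₀bad⟩
    fun _ hm _ hU hUne hUV a => BetaMemory.exists_isNext hf hcover hε hm hU hUne hUV a
  refine hX ⟨σ, hσ, fun U a hA => ?_⟩
  obtain ⟨m, hm0, hm⟩ := hrun U a hA
  exact BetaMemory.not_alphaWinsGamma hpc hε (fun n => (hm n).2) (by rw [hm0])
    fun n => (hm n).1

end SepJoint

open SepJoint in
/-- Theorem 3.1: if `X` is σ_Γ-β-defavorable and `(𝒰ₙ)` is a sequence of
countable covers of `K` which is countably pair complete with respect to `(φ, Γ)`, then for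
every `ε > 0` there is a residual set `R_ε ⊆ X` such that every `(x, y) ∈ R_ε × K`
satisfies property `(*)`. -/
theorem residual_epsilon_continuity_of_pairComplete_covers
    {X K : Type*} [TopologicalSpace X] [TopologicalSpace K]
    (f : X × K → ℝ) (hf : SeparatelyContinuous f)
    (Γ : Set (X → ℝ)) (𝒰 : ℕ → ℕ → Set K)
    (hcover : ∀ n, (⋃ k, 𝒰 n k) = Set.univ)
    (hX : SigmaGammaBetaDefavorable X Γ)
    (hpc : ∀ c : ℕ → ℕ, PairComplete f Γ (fun n => ⋂ i ≤ n, 𝒰 i (c i))) :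
    ∀ ε : ℝ, 0 < ε → ∃ R ∈ residual X, ∀ x ∈ R, ∀ y : K,
      ∃ (k : ℕ) (c : ℕ → ℕ), y ∈ (⋂ i ≤ k, 𝒰 i (c i)) ∧
        ∃ O ∈ 𝓝 ((x, y) : X × K), ∀ p ∈ O, p.2 ∈ (⋂ i ≤ k, 𝒰 i (c i)) →
          |f (x, y) - f p| < ε := by
  intro ε hε
  refine ⟨{x | ∀ y, EpsContAlongCovers f 𝒰 ε (x, y)}, mem_of_superset
    (isMeagre_setOf_not_epsContAlongCovers hf hcover hX hpc hε) fun x hx y => ?_,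
    fun x hx y => hx y⟩
  by_contra h
  exact hx ⟨y, h⟩
end

section
/- Let X and K be topological spaces, f : X × K → ℝ a separately continuous map, and φ : K → C_p(X) defined by φ(y)(x) = f(x,y). Let (Uₙ)ₙ be a sequence of open subsets of K, Γ ⊆ ℝ^X, and let P be the set of y ∈ K for which there is σ ∈ ℕ^ℕ such that y ∈ ⋂ₙ U_{σ(n)} and the sequence (⋂_{i≤n} U_{σ(i)})ₙ is countably pair complete with respect to (φ,Γ). Fix ε > 0 and let R_ε(P) be the set of x ∈ X such that f is ε-continuous at each point of {x} × P. If X is conditionally σ_Γ-α-favorable, then R_ε(P) is a residual subset of X. -/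
open Set Topology Filter

/-!
Fix a conditionally winning strategy `τ` for α. Level by level, build a tree of β-positions:
a child shrinks α's answer at its parent to an open set `V` which either lies in the oscillation
set `{t | ε/2 < |f (t, b) - f (t, b')|}` of some pair `(b, b')` admissible at that level (both
points in the sets `U i` listed at that level, and `φ b`, `φ b'` are `2⁻ⁿ`-close at α's earlier
points), or misses all of them. Keeping at each level a maximal family of positions with
pairwise disjoint answers makes the union of the answers open and dense, and a point `x` of the
intersection of these unions picks out a play compatible with `τ`.

If `f` were not ε-continuous at `(x, y)` with `y ∈ P`, witnessed by `σ`, then at the levels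
listing `σ 0, …, σ j` the second alternative is impossible, which yields pairs `(bⱼ, b'ⱼ)` in
`⋂_{i ≤ j} U (σ i)` oscillating by more than `ε/2` on `⋂ₙ Uₙ`. A cluster point `g ∈ Γ` of
`φ bⱼ - φ b'ⱼ` vanishes at all of α's points, so α's victory gives `t ∈ ⋂ₙ Uₙ` with `g t = 0`,
which is incompatible with the oscillation at `t`.
-/

namespace SepJoint

lemma hist_congr {A : Type*} {u v : ℕ → A} {n : ℕ} (h : ∀ i < n, u i = v i) :
    hist u n = hist v n :=
  congrArg List.ofFn (funext fun i => h i i.2)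

lemma alphaMove_congr {X : Type*} (τ : AlphaStrategy X) {V W : ℕ → Set X} {n : ℕ}
    (h : ∀ i ≤ n, V i = W i) : alphaMove τ V n = alphaMove τ W n :=
  congrArg τ (hist_congr fun i hi => h i (Nat.lt_succ_iff.1 hi))

/-- Since `σ ∈ ℕ^ℕ` is arbitrary, each level of the construction is tied to one finite list
of indices, and every list has to come up at arbitrarily high levels. -/
def listEnum (n : ℕ) : List ℕ := Denumerable.ofNat (List ℕ) n.unpair.1

lemma exists_listEnum_eq (s : List ℕ) (N : ℕ) : ∃ n, N ≤ n ∧ listEnum n = s :=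
  ⟨Nat.pair (Encodable.encode s) N, Nat.right_le_pair _ _, by
    simp [listEnum, Nat.unpair_pair, Denumerable.ofNat_encode]⟩

lemma diag_eq_of_forall_succ_eq {A : Type*} {W : ℕ → ℕ → A}
    (h : ∀ n, ∀ i ≤ n, W (n + 1) i = W n i) (n : ℕ) : ∀ i ≤ n, W i i = W n i := by
  induction n with
  | zero => intro i hi; rw [Nat.le_zero.1 hi]
  | succ n ih =>
    intro i hi
    rcases Nat.of_le_succ hi with hi | rfl
    · rw [ih i hi, h n i hi]
    · rfl

lemma dense_biUnion_of_maximal_pairwiseDisjoint {X ι : Type*} [TopologicalSpace X]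
    {S C : Set ι} {r : ι → Set X}
    (hC : Maximal (fun D => D ⊆ S ∧ D.PairwiseDisjoint r) C)
    (hS : ∀ O, IsOpen O → O.Nonempty → ∃ s ∈ S, (r s).Nonempty ∧ r s ⊆ O) :
    Dense (⋃ s ∈ C, r s) := by
  refine dense_iff_inter_open.2 fun O hO hO_ne => ?_
  by_contra hmiss
  obtain ⟨s, hsS, ⟨t, hts⟩, hsO⟩ := hS O hO hO_ne
  have hmissing : ∀ c ∈ C, Disjoint (r s) (r c) := fun c hc =>
    Set.disjoint_left.2 fun u hus huc => hmiss ⟨u, hsO hus, mem_biUnion hc huc⟩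
  have hsC : s ∈ C := hC.mem_of_prop_insert
    ⟨insert_subset hsS hC.1.1, hC.1.2.insert fun c hc _ => hmissing c hc⟩
  exact Set.disjoint_left.1 (hmissing s hsC) hts hts

lemma exists_maximal_pairwiseDisjoint {ι α : Type*} [PartialOrder α] [OrderBot α]
    (S : Set ι) (r : ι → α) : ∃ C, Maximal (fun D => D ⊆ S ∧ D.PairwiseDisjoint r) C :=
  zorn_subset {C | C ⊆ S ∧ C.PairwiseDisjoint r} fun c hcS hchain =>
    ⟨⋃₀ c, ⟨sUnion_subset fun _ hD => (hcS hD).1,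
      (pairwise_sUnion hchain.directedOn).2 fun _ hD => (hcS hD).2⟩,
      fun _ => subset_sUnion_of_mem⟩

noncomputable def maximalDisjoint {ι α : Type*} [PartialOrder α] [OrderBot α]
    (S : Set ι) (r : ι → α) : Set ι :=
  (exists_maximal_pairwiseDisjoint S r).choose

lemma maximal_maximalDisjoint {ι α : Type*} [PartialOrder α] [OrderBot α]
    (S : Set ι) (r : ι → α) :
    Maximal (fun D => D ⊆ S ∧ D.PairwiseDisjoint r) (maximalDisjoint S r) :=
  (exists_maximal_pairwiseDisjoint S r).choose_spec

variable {X K : Type*}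

section Oscillation

variable (f : X × K → ℝ) (δ : ℝ) (U : ℕ → Set K) (a : ℕ → X) (n : ℕ)

def oscillationSet (b b' : K) : Set X := {t | δ < |f (t, b) - f (t, b')|}

def AdmissiblePair (b b' : K) : Prop :=
  (∀ i ∈ listEnum n, b ∈ U i ∧ b' ∈ U i) ∧ ∀ m < n, |f (a m, b) - f (a m, b')| < (1 / 2) ^ n

def DecidesOscillation (V : Set X) : Prop :=
  (∃ b b', AdmissiblePair f U a n b b' ∧ V ⊆ oscillationSet f δ b b') ∨
    ∀ b b', AdmissiblePair f U a n b b' → Disjoint (oscillationSet f δ b b') V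

variable {f δ U a n}

lemma decidesOscillation_congr {a' : ℕ → X} (h : ∀ m < n, a m = a' m) {V : Set X} :
    DecidesOscillation f δ U a n V ↔ DecidesOscillation f δ U a' n V := by
  have hpair : AdmissiblePair f U a n = AdmissiblePair f U a' n := by
    funext b b'
    exact propext (and_congr_right' (forall₂_congr fun m hm => by rw [h m hm]))
  rw [DecidesOscillation, DecidesOscillation, hpair]

lemma AdmissiblePair.mem_iInter {b b' : K} (h : AdmissiblePair f U a n b b') {c : ℕ → ℕ} {j : ℕ}
    (hn : listEnum n = (List.range (j + 1)).map c) :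
    b ∈ ⋂ i ≤ j, U (c i) ∧ b' ∈ ⋂ i ≤ j, U (c i) := by
  simp only [mem_iInter₂, ← forall_and]
  exact fun i hi => h.1 _ (hn ▸ List.mem_map.2 ⟨i, List.mem_range.2 (by omega), rfl⟩)

lemma tendsto_sub_of_admissiblePair {N : ℕ → ℕ} (hN : ∀ j, j < N j) {b b' : ℕ → K}
    (hadm : ∀ j, AdmissiblePair f U a (N j) (b j) (b' j)) (k : ℕ) :
    Tendsto (fun j => f (a k, b j) - f (a k, b' j)) atTop (𝓝 0) := by
  refine squeeze_zero_norm' ?_ (tendsto_pow_atTop_nhds_zero_of_lt_one (r := (1 / 2 : ℝ))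
    (by norm_num) (by norm_num))
  filter_upwards [eventually_ge_atTop k] with j hkj
  calc ‖f (a k, b j) - f (a k, b' j)‖
      ≤ (1 / 2) ^ N j := ((hadm j).2 k (hkj.trans_lt (hN j))).le
    _ ≤ (1 / 2) ^ j := pow_le_pow_of_le_one (by norm_num) (by norm_num) (hN j).le

variable [TopologicalSpace X] [TopologicalSpace K]

lemma isOpen_oscillationSet (hf : SeparatelyContinuous f) (b b' : K) :
    IsOpen (oscillationSet f δ b b') :=
  isOpen_lt continuous_const ((hf.2 b).sub (hf.2 b')).abs

lemma exists_decidesOscillation_subset (hf : SeparatelyContinuous f) {O : Set X}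
    (hO : IsOpen O) (hO_ne : O.Nonempty) :
    ∃ V ⊆ O, IsOpen V ∧ V.Nonempty ∧ DecidesOscillation f δ U a n V := by
  by_cases h : ∃ b b', AdmissiblePair f U a n b b' ∧ (oscillationSet f δ b b' ∩ O).Nonempty
  · obtain ⟨b, b', hbb', hmeet⟩ := h
    exact ⟨_, inter_subset_right, (isOpen_oscillationSet hf b b').inter hO, hmeet,
      Or.inl ⟨b, b', hbb', inter_subset_left⟩⟩
  · simp only [not_exists, not_and, not_nonempty_iff_eq_empty] at h
    exact ⟨O, subset_rfl, hO, hO_ne,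
      Or.inr fun b b' hbb' => disjoint_iff_inter_eq_empty.2 (h b b' hbb')⟩

lemma exists_admissiblePair_meets_of_not_epsCont (hf : SeparatelyContinuous f)
    (hU : ∀ i, IsOpen (U i)) {ε : ℝ} (hε : 0 < ε) {O : Set X} (hO : IsOpen O) {x : X} {y : K}
    (hxO : x ∈ O) (hy : ∀ i ∈ listEnum n, y ∈ U i) (hxy : ¬ EpsCont f ε (x, y)) :
    ∃ b, AdmissiblePair f U a n b y ∧ (oscillationSet f (ε / 2) b y ∩ O).Nonempty := by
  have hnear_x : ∀ᶠ x' in 𝓝 x, x' ∈ O ∧ |f (x', y) - f (x, y)| < ε / 2 :=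
    (hO.eventually_mem hxO).and <| (((hf.2 y).sub continuous_const).abs.continuousAt).eventually_lt
      continuousAt_const (by simpa using half_pos hε)
  have hnear_y : ∀ᶠ y' in 𝓝 y,
      (∀ i ∈ listEnum n, y' ∈ U i) ∧ ∀ m < n, |f (a m, y') - f (a m, y)| < (1 / 2) ^ n := by
    refine (eventually_all_finite (List.finite_toSet _)).2 (fun i hi => (hU i).mem_nhds (hy i hi))
      |>.and <| (eventually_all_finite (Set.finite_Iio n)).2 fun m _ => ?_
    exact (((hf.1 (a m)).sub continuous_const).abs.continuousAt).eventually_lt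
      continuousAt_const (by simp)
  simp only [EpsCont, not_exists, not_and, not_forall, not_lt] at hxy
  obtain ⟨⟨x', y'⟩, ⟨⟨hx'O, hx'⟩, hy'U, hy'a⟩, hfar⟩ := hxy _ (hnear_x.prod_nhds hnear_y)
  refine ⟨y', ⟨fun i hi => ⟨hy'U i hi, hy i hi⟩, hy'a⟩, x', ?_, hx'O⟩
  have htri := abs_sub_le (f (x, y)) (f (x', y)) (f (x', y'))
  rw [abs_sub_comm (f (x, y)) (f (x', y)), abs_sub_comm (f (x', y)) (f (x', y'))] at htri
  show ε / 2 < |f (x', y') - f (x', y)|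
  linarith

lemma DecidesOscillation.exists_subset_of_not_epsCont {ε : ℝ} {V : Set X}
    (hdec : DecidesOscillation f (ε / 2) U a n V) (hf : SeparatelyContinuous f)
    (hU : ∀ i, IsOpen (U i)) (hε : 0 < ε) (hV : IsOpen V) {x : X} {y : K} (hxV : x ∈ V)
    (hy : ∀ i ∈ listEnum n, y ∈ U i) (hxy : ¬ EpsCont f ε (x, y)) :
    ∃ b b', AdmissiblePair f U a n b b' ∧ V ⊆ oscillationSet f (ε / 2) b b' :=
  hdec.resolve_right fun hdisj => by
    obtain ⟨b, hb, hmeet⟩ := exists_admissiblePair_meets_of_not_epsCont hf hU hε hV hxV hy hxy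
    exact not_disjoint_iff_nonempty_inter.2 hmeet (hdisj b y hb)

end Oscillation

lemma PairComplete.not_alphaWinsGamma {f : X × K → ℝ} {Γ : Set (X → ℝ)} {W : ℕ → Set K}
    (hpc : PairComplete f Γ W) {Uα : ℕ → Set X} {a : ℕ → X} {b b' : ℕ → K}
    (hb : ∀ j, b j ∈ W j) (hb' : ∀ j, b' j ∈ W j)
    (hsmall : ∀ k, Tendsto (fun j => f (a k, b j) - f (a k, b' j)) atTop (𝓝 0))
    {δ : ℝ} (hδ : 0 < δ) (hbig : ∀ j, ∀ t ∈ ⋂ n, Uα n, δ < |f (t, b j) - f (t, b' j)|) :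
    ¬ AlphaWinsGamma Γ Uα a := by
  intro hwin
  obtain ⟨g, hgΓ, hg⟩ := hpc b b' hb hb'
  have hg_at : ∀ t, MapClusterPt (g t) atTop (fun j => f (t, b j) - f (t, b' j)) :=
    fun t => hg.continuousAt_comp (continuous_apply t).continuousAt
  have hg_a : ∀ k, g (a k) = 0 := fun k =>
    eq_of_nhds_neBot ((hg_at (a k)).neBot.mono (inf_le_inf_left _ (hsmall k)))
  obtain ⟨t, ht, hgt⟩ := hwin g hgΓ
  have hgt_zero : g t = 0 := by
    simpa using closure_minimal (range_subset_iff.2 hg_a) isClosed_singleton hgt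
  have hsmall_t : ∀ᶠ r in 𝓝 (g t), |r| < δ := by
    rw [hgt_zero]
    exact (isOpen_lt continuous_abs continuous_const).mem_nhds (by simpa using hδ)
  obtain ⟨j, hj⟩ := ((hg_at t).frequently hsmall_t).exists
  exact (hbig j t ht).not_gt hj

variable [TopologicalSpace X]

section LegalPrefix

variable {τ : AlphaStrategy X}

def LegalPrefix (τ : AlphaStrategy X) (V : ℕ → Set X) (n : ℕ) : Prop :=
  IsOpen (V 0) ∧ (V 0).Nonempty ∧
    ∀ i < n, IsOpen (V (i + 1)) ∧ (V (i + 1)).Nonempty ∧ V (i + 1) ⊆ (alphaMove τ V i).1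

lemma AlphaStratLegal.alphaMove_spec (hτ : AlphaStratLegal τ) {V : ℕ → Set X} {n : ℕ}
    (hV : LegalPrefix τ V n) :
    IsOpen (alphaMove τ V n).1 ∧ (alphaMove τ V n).1.Nonempty ∧ (alphaMove τ V n).1 ⊆ V n :=
  hτ V n ⟨hV.1, hV.2.1⟩ hV.2.2

lemma LegalPrefix.extend {V W : ℕ → Set X} {n : ℕ} (hV : LegalPrefix τ V n)
    (hWV : ∀ i ≤ n, W i = V i)
    (hW : IsOpen (W (n + 1)) ∧ (W (n + 1)).Nonempty ∧ W (n + 1) ⊆ (alphaMove τ V n).1) :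
    LegalPrefix τ W (n + 1) := by
  obtain ⟨h0, h0_ne, hstep⟩ := hV
  refine ⟨hWV 0 n.zero_le ▸ h0, hWV 0 n.zero_le ▸ h0_ne, fun i hi => ?_⟩
  rw [alphaMove_congr τ fun j hj => hWV j (by omega)]
  rcases Nat.lt_succ_iff_lt_or_eq.1 hi with hi | rfl
  · rw [hWV (i + 1) hi]
    exact hstep i hi
  · exact hW

lemma BetaLegalRun.legalPrefix {V : ℕ → Set X} (hV : BetaLegalRun τ V) (n : ℕ) :
    LegalPrefix τ V n :=
  ⟨hV.1, hV.2.1, fun i _ => hV.2.2 i⟩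

end LegalPrefix

section Tree

variable (f : X × K → ℝ) (δ : ℝ) (U : ℕ → Set K) (τ : AlphaStrategy X)

/- A node of level `n` is a whole sequence of β-moves `W`, of which only `W 0, …, W n` matter;
α's answer to it is `(alphaMove τ W n).1`. -/
def childNodes (n : ℕ) (S : Set (ℕ → Set X)) : Set (ℕ → Set X) :=
  {W | ∃ V ∈ S, (∀ i ≤ n, W i = V i) ∧ IsOpen (W (n + 1)) ∧ (W (n + 1)).Nonempty ∧
    W (n + 1) ⊆ (alphaMove τ V n).1 ∧
    DecidesOscillation f δ U (fun m => (alphaMove τ W m).2) (n + 1) (W (n + 1))}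

noncomputable def levelNodes : ℕ → Set (ℕ → Set X)
  | 0 => maximalDisjoint {W | IsOpen (W 0) ∧ (W 0).Nonempty} fun W => (alphaMove τ W 0).1
  | n + 1 => maximalDisjoint (childNodes f δ U τ n (levelNodes n)) fun W =>
      (alphaMove τ W (n + 1)).1

def levelUnion (n : ℕ) : Set X := ⋃ W ∈ levelNodes f δ U τ n, (alphaMove τ W n).1

variable {f δ U τ}

lemma levelNodes_succ_subset (n : ℕ) :
    levelNodes f δ U τ (n + 1) ⊆ childNodes f δ U τ n (levelNodes f δ U τ n) :=
  (maximal_maximalDisjoint _ _).1.1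

lemma pairwiseDisjoint_levelNodes (n : ℕ) :
    (levelNodes f δ U τ n).PairwiseDisjoint fun W => (alphaMove τ W n).1 := by
  cases n <;> exact (maximal_maximalDisjoint _ _).1.2

lemma eq_of_mem_levelNodes {n : ℕ} {W W' : ℕ → Set X} (hW : W ∈ levelNodes f δ U τ n)
    (hW' : W' ∈ levelNodes f δ U τ n) {x : X} (hx : x ∈ (alphaMove τ W n).1)
    (hx' : x ∈ (alphaMove τ W' n).1) : W = W' :=
  (pairwiseDisjoint_levelNodes n).elim hW hW' (not_disjoint_iff.2 ⟨x, hx, hx'⟩)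

lemma legalPrefix_of_mem_levelNodes {n : ℕ} {W : ℕ → Set X} (hW : W ∈ levelNodes f δ U τ n) :
    LegalPrefix τ W n := by
  induction n generalizing W with
  | zero =>
    obtain ⟨hW₀, hW₀_ne⟩ := (maximal_maximalDisjoint _ _).1.1 hW
    exact ⟨hW₀, hW₀_ne, fun i hi => absurd hi i.not_lt_zero⟩
  | succ n ih =>
    obtain ⟨V, hV, hWV, hW_open, hW_ne, hW_sub, -⟩ := levelNodes_succ_subset n hW
    exact (ih hV).extend hWV ⟨hW_open, hW_ne, hW_sub⟩

lemma isOpen_levelUnion (hτ : AlphaStratLegal τ) (n : ℕ) : IsOpen (levelUnion f δ U τ n) :=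
  isOpen_biUnion fun _ hW => (hτ.alphaMove_spec (legalPrefix_of_mem_levelNodes hW)).1

lemma dense_levelUnion [TopologicalSpace K] (hf : SeparatelyContinuous f)
    (hτ : AlphaStratLegal τ) (n : ℕ) :
    Dense (levelUnion f δ U τ n) := by
  induction n with
  | zero =>
    refine dense_biUnion_of_maximal_pairwiseDisjoint (maximal_maximalDisjoint _ _)
      fun O hO hO_ne => ?_
    have hlegal : LegalPrefix τ (fun _ => O) 0 :=
      ⟨hO, hO_ne, fun i hi => absurd hi i.not_lt_zero⟩
    obtain ⟨-, hne, hsub⟩ := hτ.alphaMove_spec hlegal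
    exact ⟨fun _ => O, ⟨hO, hO_ne⟩, hne, hsub⟩
  | succ n ih =>
    refine dense_biUnion_of_maximal_pairwiseDisjoint (maximal_maximalDisjoint _ _)
      fun O hO hO_ne => ?_
    obtain ⟨x, hxO, hx⟩ := ih.inter_open_nonempty O hO hO_ne
    obtain ⟨V, hV, hxV⟩ := mem_iUnion₂.1 hx
    have hV_legal := legalPrefix_of_mem_levelNodes hV
    obtain ⟨O', hO'_sub, hO'_open, hO'_ne, hO'_dec⟩ := exists_decidesOscillation_subset
      (δ := δ) (U := U) (a := fun m => (alphaMove τ V m).2) (n := n + 1) hf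
      (hO.inter (hτ.alphaMove_spec hV_legal).1) ⟨x, hxO, hxV⟩
    set W := Function.update V (n + 1) O'
    have hWV : ∀ i ≤ n, W i = V i := fun i hi => Function.update_of_ne (by omega) _ _
    have hW_new : W (n + 1) = O' := Function.update_self ..
    have hW_sub : W (n + 1) ⊆ (alphaMove τ V n).1 := hW_new ▸ hO'_sub.trans inter_subset_right
    obtain ⟨-, hne, hsub⟩ := hτ.alphaMove_spec <|
      hV_legal.extend hWV ⟨hW_new ▸ hO'_open, hW_new ▸ hO'_ne, hW_sub⟩
    refine ⟨W, ⟨V, hV, hWV, hW_new ▸ hO'_open, hW_new ▸ hO'_ne, hW_sub, ?_⟩, hne,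
      hsub.trans (hW_new ▸ hO'_sub.trans inter_subset_left)⟩
    rw [hW_new]
    exact (decidesOscillation_congr fun m hm =>
      by rw [alphaMove_congr τ fun i hi => (hWV i (by omega)).symm]).1 hO'_dec

lemma exists_coherent_levelNodes (hτ : AlphaStratLegal τ) {x : X}
    (hx : x ∈ ⋂ n, levelUnion f δ U τ n) :
    ∃ W : ℕ → ℕ → Set X, ∀ n, W n ∈ levelNodes f δ U τ n ∧ x ∈ (alphaMove τ (W n) n).1 ∧
      ∀ i ≤ n, W (n + 1) i = W n i := by
  choose W hW hxW using fun n => mem_iUnion₂.1 (mem_iInter.1 hx n)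
  refine ⟨W, fun n => ⟨hW n, hxW n, ?_⟩⟩
  obtain ⟨V, hV, hWV, -, -, hsub, -⟩ := levelNodes_succ_subset n (hW (n + 1))
  have hxV : x ∈ (alphaMove τ V n).1 :=
    hsub ((hτ.alphaMove_spec (legalPrefix_of_mem_levelNodes (hW (n + 1)))).2.2 (hxW (n + 1)))
  rwa [eq_of_mem_levelNodes hV (hW n) hxV (hxW n)] at hWV

lemma exists_betaLegalRun_of_mem_iInter_levelUnion (hτ : AlphaStratLegal τ) {x : X}
    (hx : x ∈ ⋂ n, levelUnion f δ U τ n) :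
    ∃ V, BetaLegalRun τ V ∧ (∀ n, x ∈ (alphaMove τ V n).1) ∧
      ∀ n, DecidesOscillation f δ U (fun m => (alphaMove τ V m).2) (n + 1) (V (n + 1)) := by
  obtain ⟨W, hW⟩ := exists_coherent_levelNodes hτ hx
  have hdiag := diag_eq_of_forall_succ_eq fun n => (hW n).2.2
  have hmove : ∀ n, ∀ m ≤ n, alphaMove τ (fun i => W i i) m = alphaMove τ (W n) m :=
    fun n m hm => alphaMove_congr τ fun i hi => hdiag n i (hi.trans hm)
  have hlegal : ∀ n, LegalPrefix τ (W n) n := fun n => legalPrefix_of_mem_levelNodes (hW n).1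
  refine ⟨fun i => W i i, ⟨(hlegal 0).1, (hlegal 0).2.1, fun n => ?_⟩, fun n => ?_, fun n => ?_⟩
  · rw [hmove (n + 1) n n.le_succ]
    exact (hlegal (n + 1)).2.2 n n.lt_succ_self
  · rw [hmove n n le_rfl]
    exact (hW n).2.1
  · obtain ⟨-, -, -, -, -, -, hdec⟩ := levelNodes_succ_subset n (hW (n + 1)).1
    exact (decidesOscillation_congr fun m hm => by rw [hmove (n + 1) m hm.le]).2 hdec

end Tree

lemma CondAlphaWinningGamma.epsCont_of_decidesOscillation [TopologicalSpace K]
    {Γ : Set (X → ℝ)} {τ : AlphaStrategy X} (hτ : CondAlphaWinningGamma Γ τ)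
    {f : X × K → ℝ} (hf : SeparatelyContinuous f) {U : ℕ → Set K} (hU : ∀ i, IsOpen (U i))
    {ε : ℝ} (hε : 0 < ε) {V : ℕ → Set X} (hV : BetaLegalRun τ V) {x : X}
    (hx : ∀ n, x ∈ (alphaMove τ V n).1)
    (hdec : ∀ n, DecidesOscillation f (ε / 2) U (fun m => (alphaMove τ V m).2) (n + 1) (V (n + 1)))
    {y : K} {c : ℕ → ℕ} (hyc : ∀ n, y ∈ U (c n))
    (hpc : PairComplete f Γ fun n => ⋂ i ≤ n, U (c i)) :
    EpsCont f ε (x, y) := by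
  by_contra hxy
  have hmove_sub : ∀ n, (alphaMove τ V n).1 ⊆ V n := fun n =>
    (hτ.1.alphaMove_spec (hV.legalPrefix n)).2.2
  have hlevel : ∀ j, ∃ n, j ≤ n ∧ listEnum (n + 1) = (List.range (j + 1)).map c := fun j => by
    obtain ⟨n, hn, hs⟩ := exists_listEnum_eq ((List.range (j + 1)).map c) (j + 1)
    exact ⟨n - 1, by omega, by rwa [Nat.sub_add_cancel (by omega)]⟩
  choose L hjL hL using hlevel
  have hy : ∀ j, ∀ i ∈ listEnum (L j + 1), y ∈ U i := fun j i hi => by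
    obtain ⟨k, -, rfl⟩ := List.mem_map.1 (hL j ▸ hi)
    exact hyc k
  choose b b' hadm hosc using fun j => (hdec (L j)).exists_subset_of_not_epsCont hf hU hε
    (hV.2.2 (L j)).1 (hmove_sub _ (hx _)) (hy j) hxy
  have hmem := fun j => (hadm j).mem_iInter (hL j)
  exact hpc.not_alphaWinsGamma (fun j => (hmem j).1) (fun j => (hmem j).2)
    (tendsto_sub_of_admissiblePair (fun j => Nat.lt_succ_of_le (hjL j)) hadm) (half_pos hε)
    (fun j t ht => hosc j (hmove_sub _ (mem_iInter.1 ht _))) (hτ.2 V hV ⟨x, mem_iInter.2 hx⟩)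

end SepJoint

open SepJoint in
/-- Theorem 3.2 (1): if `X` is conditionally σ_Γ-α-favorable, then the set
`R_ε(P)` of points `x` such that `f` is ε-continuous at each point of `{x} × P` is a
residual subset of `X`. -/
theorem residual_epsilon_continuity_of_condAlphaFavorable
    {X K : Type*} [TopologicalSpace X] [TopologicalSpace K]
    (f : X × K → ℝ) (hf : SeparatelyContinuous f)
    (U : ℕ → Set K) (hU : ∀ n, IsOpen (U n)) (Γ : Set (X → ℝ))
    (P : Set K)
    (hP : P = {y : K | ∃ c : ℕ → ℕ, (∀ n, y ∈ U (c n)) ∧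
        PairComplete f Γ (fun n => ⋂ i ≤ n, U (c i))})
    (ε : ℝ) (hε : 0 < ε)
    (hX : CondSigmaGammaAlphaFavorable X Γ) :
    {x : X | ∀ y ∈ P, EpsCont f ε (x, y)} ∈ residual X := by
  obtain ⟨τ, hτ⟩ := hX
  rw [mem_residual_iff]
  refine ⟨range (levelUnion f (ε / 2) U τ), forall_mem_range.2 (isOpen_levelUnion hτ.1),
    forall_mem_range.2 (dense_levelUnion hf hτ.1), countable_range _, ?_⟩
  rw [sInter_range]
  intro x hx y hy
  obtain ⟨V, hV, hxV, hdec⟩ := exists_betaLegalRun_of_mem_iInter_levelUnion hτ.1 hx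
  rw [hP] at hy
  obtain ⟨c, hyc, hpc⟩ := hy
  exact hτ.epsCont_of_decidesOscillation hf hU hε hV hxV hdec hyc hpc
end

section
/- Let X be a σ_{C(X)}-β-defavorable space, K a pseudocompact space, and f : X × K → ℝ a separately continuous map. Suppose that every bounded subspace of C_p(X) is relatively countably compact in C_p(X). Then there is a dense Gδ subset R of X such that f is jointly continuous at each point of R × K. -/
open Set Topology Filter

namespace SepJoint

variable (X : Type*) [TopologicalSpace X]

variable {X}

/-!
Let `E_ε` be the open set of points near which the functions `f (·, y)`, `y ∈ K`, oscillate by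
at most `ε`; `f` is jointly continuous on `(⋂ₙ E_{1/(n+1)}) × K`, so it suffices that `X` is Baire
and every `E_ε` is dense. Both follow from the game. If an open `V₀` missed `E_ε`, then, `K` being
pseudocompact, β could answer α's move `(Uₙ, aₙ)` by a pair `yₙ, zₙ` with `f (·, yₙ) - f (·, zₙ)`
small at `a₀, …, aₙ` but above `ε / 4` on the next move `Uₙ₊₁`. These differences form a bounded
subset of `C_p(X)`, because every continuous function on `C_p(X)` depends sequentially on countably
many coordinates, so they have a cluster point `g`; it vanishes at every `aₙ` but is at least
`ε / 4` on `⋂ₙ Uₙ`, and β wins.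
-/

variable {X : Type*} [TopologicalSpace X]

abbrev Cp (X : Type*) [TopologicalSpace X] := {g : X → ℝ // Continuous g}

/-- `X` is not assumed to be Tychonoff, so `C(X)` separates points only up to
`cpEval x = cpEval y`, and interpolation in `C(X)` works modulo this relation. -/
def cpEval (x : X) (g : Cp X) : ℝ := g.1 x

lemma apply_eq_of_cpEval_eq {x y : X} (h : cpEval x = cpEval y) (g : Cp X) : g.1 x = g.1 y :=
  congrFun h g

lemma exists_cp_eq_one_eq_zero (x : X) (s : Finset X) (hs : ∀ y ∈ s, cpEval x ≠ cpEval y) :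
    ∃ p : Cp X, p.1 x = 1 ∧ ∀ y ∈ s, p.1 y = 0 := by
  classical
  induction s using Finset.induction_on with
  | empty => exact ⟨⟨fun _ => 1, continuous_const⟩, rfl, by simp⟩
  | insert y s _ ih =>
    obtain ⟨p, hpx, hps⟩ := ih fun z hz => hs z (Finset.mem_insert_of_mem hz)
    obtain ⟨g, hg⟩ := Function.ne_iff.1 (hs y (Finset.mem_insert_self y s))
    have hxy : g.1 x - g.1 y ≠ 0 := sub_ne_zero.2 hg
    refine ⟨⟨fun z => p.1 z * ((g.1 z - g.1 y) / (g.1 x - g.1 y)),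
      p.2.mul ((g.2.sub continuous_const).div_const _)⟩, by simp [hpx, hxy], ?_⟩
    simp only [Finset.forall_mem_insert, sub_self, zero_div, mul_zero, true_and]
    exact fun z hz => by simp [hps z hz]

lemma exists_cp_eqOn (s : Finset X) (v : X → ℝ)
    (hv : ∀ x ∈ s, ∀ y ∈ s, cpEval x = cpEval y → v x = v y) :
    ∃ g : Cp X, ∀ x ∈ s, g.1 x = v x := by
  classical
  induction s using Finset.induction_on with
  | empty => exact ⟨⟨fun _ => 0, continuous_const⟩, by simp⟩
  | insert x s _ ih =>
    obtain ⟨g, hg⟩ := ih fun y hy z hz =>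
      hv y (Finset.mem_insert_of_mem hy) z (Finset.mem_insert_of_mem hz)
    by_cases hx : ∃ y ∈ s, cpEval x = cpEval y
    · obtain ⟨y, hy, hxy⟩ := hx
      refine ⟨g, (Finset.forall_mem_insert _ _ _).2 ⟨?_, hg⟩⟩
      rw [apply_eq_of_cpEval_eq hxy, hg y hy,
        hv x (Finset.mem_insert_self x s) y (Finset.mem_insert_of_mem hy) hxy]
    · push Not at hx
      obtain ⟨p, hpx, hps⟩ := exists_cp_eq_one_eq_zero x s hx
      refine ⟨⟨fun z => g.1 z + (v x - g.1 x) * p.1 z, g.2.add (continuous_const.mul p.2)⟩,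
        (Finset.forall_mem_insert _ _ _).2 ⟨by simp [hpx], fun z hz => by simp [hps z hz, hg z hz]⟩⟩

def box (σ : Finset (X × ℚ × ℚ)) : Set (Cp X) :=
  {g | ∀ p ∈ σ, g.1 p.1 ∈ Ioo (p.2.1 : ℝ) p.2.2}

lemma exists_box_subset {O : Set (Cp X)} (hO : IsOpen O) {g : Cp X} (hg : g ∈ O) :
    ∃ σ : Finset (X × ℚ × ℚ), g ∈ box σ ∧ box σ ⊆ O := by
  classical
  obtain ⟨O', hO', rfl⟩ := isOpen_induced_iff.1 hO
  obtain ⟨I, u, hu, hIu⟩ := isOpen_pi_iff.1 hO' g.1 hg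
  have hq : ∀ i ∈ I, ∃ q : ℚ × ℚ, g.1 i ∈ Ioo (q.1 : ℝ) q.2 ∧ Ioo (q.1 : ℝ) q.2 ⊆ u i := by
    intro i hi
    obtain ⟨l, r, ⟨hl, hr⟩, hsub⟩ :=
      mem_nhds_iff_exists_Ioo_subset.1 ((hu i hi).1.mem_nhds (hu i hi).2)
    obtain ⟨q₁, hlq, hq₁⟩ := exists_rat_btwn hl
    obtain ⟨q₂, hq₂, hqr⟩ := exists_rat_btwn hr
    exact ⟨(q₁, q₂), ⟨hq₁, hq₂⟩, (Ioo_subset_Ioo hlq.le hqr.le).trans hsub⟩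
  choose q hq using hq
  refine ⟨I.attach.image fun i => (i.1, q i.1 i.2), ?_, fun h hh => hIu fun i hi => ?_⟩
  · simp only [box, Finset.forall_mem_image, Finset.mem_attach, forall_const, Subtype.forall]
    exact fun i hi => (hq i hi).1
  · exact (hq i hi).2 (hh _ (Finset.mem_image.2 ⟨⟨i, hi⟩, Finset.mem_attach _ _, rfl⟩))

lemma eventually_mem_box {σ : Finset (X × ℚ × ℚ)} {h : Cp X} (hh : h ∈ box σ) {u : ℕ → Cp X}
    (hu : ∀ p ∈ σ, Tendsto (fun n => (u n).1 p.1) atTop (𝓝 (h.1 p.1))) :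
    ∀ᶠ n in atTop, u n ∈ box σ :=
  (Filter.eventually_all_finset σ).2 fun p hp => hu p hp (Ioo_mem_nhds (hh p hp).1 (hh p hp).2)

lemma countable_setOf_finset_subset {α : Type*} {T : Set α} (hT : T.Countable) :
    {s : Finset α | (s : Set α) ⊆ T}.Countable := by
  classical
  have := hT.to_subtype
  refine (countable_range fun t : Finset T => t.map (Function.Embedding.subtype _)).mono ?_
  exact fun s hs => ⟨s.subtype (· ∈ T), Finset.subtype_map_of_mem hs⟩

lemma exists_countable_forall_subset {α β : Type*} [Countable β] (F : Finset (α × β) → Set α)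
    (hF : ∀ σ, (F σ).Countable) :
    ∃ D : Set α, D.Countable ∧ ∀ σ : Finset (α × β), (∀ p ∈ σ, p.1 ∈ D) → F σ ⊆ D := by
  classical
  let step (S : Set α) : Set α :=
    S ∪ ⋃ σ ∈ {σ : Finset (α × β) | (σ : Set (α × β)) ⊆ S ×ˢ univ}, F σ
  let Ds (k : ℕ) : Set α := step^[k] ∅
  have hsucc (k : ℕ) : Ds (k + 1) = step (Ds k) := Function.iterate_succ_apply' step k ∅
  have hcount (k : ℕ) : (Ds k).Countable := by
    induction k with
    | zero => exact countable_empty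
    | succ k ih =>
      rw [hsucc]
      exact ih.union ((countable_setOf_finset_subset (ih.prod countable_univ)).biUnion
        fun σ _ => hF σ)
  have hmono : Monotone Ds := monotone_nat_of_le_succ fun k => hsucc k ▸ subset_union_left
  refine ⟨⋃ k, Ds k, countable_iUnion hcount, fun σ hσ => ?_⟩
  obtain ⟨k, hk⟩ := hmono.directed_le.exists_mem_subset_of_finset_subset_biUnion
    (s := σ.image Prod.fst) fun x hx => by
      obtain ⟨p, hp, rfl⟩ := Finset.mem_image.1 hx
      exact hσ p hp
  refine subset_trans ?_ (subset_iUnion Ds (k + 1))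
  rw [hsucc]
  refine subset_union_of_subset_right (subset_biUnion_of_mem (u := F) ?_) _
  exact fun p hp => ⟨hk (by simpa using ⟨p.2, hp⟩), mem_univ _⟩

/-- `σ` moves each constraint of `γ` whose point is `C(X)`-indistinguishable from a point of `D`
to such a point; the other constraints of `γ` are then met by interpolating `h`. -/
lemma exists_box_forall_exists_mem_box_eqOn (D : Set X) {h : Cp X}
    {γ : Finset (X × ℚ × ℚ)} (hγ : h ∈ box γ) :
    ∃ σ : Finset (X × ℚ × ℚ), (∀ p ∈ σ, p.1 ∈ D) ∧ h ∈ box σ ∧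
      ∀ g ∈ box σ, ∀ T : Finset X, (∀ x ∈ T, x ∈ D) →
        ∃ g' ∈ box γ, ∀ x ∈ T, g'.1 x = g.1 x := by
  classical
  have hrep (x : X) : ∃ r, (∃ d ∈ D, cpEval x = cpEval d) → r ∈ D ∧ cpEval x = cpEval r := by
    by_cases hx : ∃ d ∈ D, cpEval x = cpEval d
    · obtain ⟨d, hd, hxd⟩ := hx
      exact ⟨d, fun _ => ⟨hd, hxd⟩⟩
    · exact ⟨x, fun h => absurd h hx⟩
  choose rep hrep using hrep
  refine ⟨(γ.filter fun p => ∃ d ∈ D, cpEval p.1 = cpEval d).image fun p => (rep p.1, p.2),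
    ?_, ?_, fun g hg T hT => ?_⟩
  · simp only [Finset.forall_mem_image, Finset.mem_filter]
    exact fun p hp => (hrep p.1 hp.2).1
  · simp only [box, Finset.forall_mem_image, Finset.mem_filter]
    exact fun p hp => apply_eq_of_cpEval_eq (hrep p.1 hp.2).2 h ▸ hγ p hp.1
  let v (x : X) : ℝ := if ∃ c ∈ T, cpEval x = cpEval c then g.1 x else h.1 x
  obtain ⟨g', hg'⟩ := exists_cp_eqOn (T ∪ γ.image Prod.fst) v fun x _ y _ hxy => by
    simp only [v, hxy, apply_eq_of_cpEval_eq hxy]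
  refine ⟨g', fun p hp => ?_, fun x hx => ?_⟩
  · rw [hg' p.1 (Finset.mem_union_right _ (Finset.mem_image_of_mem _ hp))]
    by_cases hc : ∃ c ∈ T, cpEval p.1 = cpEval c
    · obtain ⟨c, hcT, hpc⟩ := hc
      have hD : ∃ d ∈ D, cpEval p.1 = cpEval d := ⟨c, hT c hcT, hpc⟩
      simp only [v, if_pos (⟨c, hcT, hpc⟩ : ∃ c ∈ T, cpEval p.1 = cpEval c),
        apply_eq_of_cpEval_eq (hrep p.1 hD).2 g]
      exact hg _ (Finset.mem_image.2 ⟨p, Finset.mem_filter.2 ⟨hp, hD⟩, rfl⟩)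
    · simp only [v, if_neg hc]
      exact hγ p hp
  · rw [hg' x (Finset.mem_union_left _ hx)]
    simp only [v, if_pos (⟨x, hx, rfl⟩ : ∃ c ∈ T, cpEval x = cpEval c)]

/-- `D` is closed under adding the points of a box inside `O` chosen for each box with points in
`D` that meets `O`; such a box is reached by the `u n` and glued to any box around `h`. -/
lemma exists_countable_mem_closure_of_isOpen {O : Set (Cp X)} (hO : IsOpen O) :
    ∃ D : Set X, D.Countable ∧ ∀ (h : Cp X) (u : ℕ → Cp X), (∃ᶠ n in atTop, u n ∈ O) →
      (∀ x ∈ D, Tendsto (fun n => (u n).1 x) atTop (𝓝 (h.1 x))) → h ∈ closure O := by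
  classical
  have hwit (σ : Finset (X × ℚ × ℚ)) : ∃ τ : Finset (X × ℚ × ℚ),
      (O ∩ box σ).Nonempty → box τ ⊆ O ∧ ∃ w ∈ box σ, w ∈ box τ := by
    by_cases hσ : (O ∩ box σ).Nonempty
    · obtain ⟨w, hwO, hwσ⟩ := hσ
      obtain ⟨τ, hwτ, hτO⟩ := exists_box_subset hO hwO
      exact ⟨τ, fun _ => ⟨hτO, w, hwσ, hwτ⟩⟩
    · exact ⟨∅, fun h => absurd h hσ⟩
  choose τ hτ using hwit
  obtain ⟨D, hD, hDτ⟩ := exists_countable_forall_subset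
    (fun σ => ((τ σ).image Prod.fst : Set X)) fun σ => Finset.countable_toSet _
  refine ⟨D, hD, fun h u hfreq hu => mem_closure_iff.2 fun o ho hho => ?_⟩
  obtain ⟨γ, hγh, hγo⟩ := exists_box_subset ho hho
  obtain ⟨σ, hσD, hσh, hglue⟩ := exists_box_forall_exists_mem_box_eqOn D hγh
  obtain ⟨n, hnO, hnσ⟩ :=
    (hfreq.and_eventually (eventually_mem_box hσh fun p hp => hu p.1 (hσD p hp))).exists
  obtain ⟨hτO, w, hwσ, hwτ⟩ := hτ σ ⟨u n, hnO, hnσ⟩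
  obtain ⟨g', hg'γ, hg'w⟩ := hglue w hwσ ((τ σ).image Prod.fst) fun x hx =>
    hDτ σ hσD (Finset.mem_coe.2 hx)
  exact ⟨g', hγo hg'γ, hτO fun p hp => hg'w p.1 (Finset.mem_image_of_mem _ hp) ▸ hwτ p hp⟩

lemma exists_countable_tendsto_of_continuous {G : Cp X → ℝ} (hG : Continuous G) :
    ∃ D : Set X, D.Countable ∧ ∀ (h : Cp X) (u : ℕ → Cp X),
      (∀ x ∈ D, Tendsto (fun n => (u n).1 x) atTop (𝓝 (h.1 x))) →
        Tendsto (G ∘ u) atTop (𝓝 (G h)) := by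
  choose D₁ hD₁ hcl₁ using fun q : ℚ =>
    exists_countable_mem_closure_of_isOpen (isOpen_lt continuous_const hG :
      IsOpen {g | (q : ℝ) < G g})
  choose D₂ hD₂ hcl₂ using fun q : ℚ =>
    exists_countable_mem_closure_of_isOpen (isOpen_lt hG continuous_const :
      IsOpen {g | G g < q})
  refine ⟨⋃ q, D₁ q ∪ D₂ q, countable_iUnion fun q => (hD₁ q).union (hD₂ q),
    fun h u hu => tendsto_order.2 ⟨fun a ha => ?_, fun b hb => ?_⟩⟩
  · obtain ⟨q, haq, hqh⟩ := exists_rat_btwn ha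
    by_contra hev
    have hcl := hcl₂ q h u ((not_eventually.1 hev).mono fun n hn => (not_lt.1 hn).trans_lt haq)
      fun x hx => hu x (mem_iUnion.2 ⟨q, Or.inr hx⟩)
    exact (closure_lt_subset_le hG continuous_const hcl).not_gt hqh
  · obtain ⟨q, hhq, hqb⟩ := exists_rat_btwn hb
    by_contra hev
    have hcl := hcl₁ q h u ((not_eventually.1 hev).mono fun n hn => hqb.trans_le (not_lt.1 hn))
      fun x hx => hu x (mem_iUnion.2 ⟨q, Or.inl hx⟩)
    exact (closure_lt_subset_le continuous_const hG hcl).not_gt hhq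

lemma _root_.MapClusterPt.eq_of_tendsto {α Y : Type*} [TopologicalSpace Y] [T2Space Y]
    {F : Filter α} {u : α → Y} {x y : Y} (hx : MapClusterPt x F u) (hy : Tendsto u F (𝓝 y)) :
    x = y :=
  eq_of_nhds_neBot (hx.clusterPt.mono hy)

lemma BoundedIn.image {Y Z : Type*} [TopologicalSpace Y] [TopologicalSpace Z] {s : Set Y}
    (hs : BoundedIn s) {φ : Y → Z} (hφ : Continuous φ) : BoundedIn (φ '' s) := by
  intro G hG
  obtain ⟨M, hM⟩ := hs (G ∘ φ) (hG.comp hφ)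
  exact ⟨M, forall_mem_image.2 hM⟩

lemma BoundedIn.exists_abs_apply_le {A : Set (Cp X)} (hA : BoundedIn A) (x : X) :
    ∃ M, ∀ g ∈ A, |g.1 x| ≤ M :=
  hA (fun g => g.1 x) ((continuous_apply x).comp continuous_subtype_val)

noncomputable def cpSub (g h : Cp X) : Cp X := ⟨g.1 - h.1, g.2.sub h.2⟩

lemma exists_strictMono_tendsto_of_abs_le {ι : Type*} [Countable ι] (w : ℕ → ι → ℝ)
    (M : ι → ℝ) (hw : ∀ n i, |w n i| ≤ M i) :
    ∃ L : ι → ℝ, ∃ φ : ℕ → ℕ, StrictMono φ ∧ Tendsto (w ∘ φ) atTop (𝓝 L) := by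
  obtain ⟨L, -, φ, hφ, hL⟩ :=
    (isCompact_univ_pi fun i => isCompact_Icc (a := -M i) (b := M i)).tendsto_subseq
      (x := w) fun n i _ => abs_le.1 (hw n i)
  exact ⟨L, φ, hφ, hL⟩

/-- Products of bounded sets need not be bounded. Here, a sequence of differences along which
`G` blows up has a subsequence converging on the countable set that `G` depends on, and the
difference of cluster points of its two halves is then a limit of its `G`-values. -/
lemma boundedIn_image2_cpSub (hcc : ∀ Y : Set (Cp X), BoundedIn Y → RelCountablyCompact Y)
    {A : Set (Cp X)} (hA : BoundedIn A) : BoundedIn (image2 cpSub A A) := by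
  intro G hG
  by_contra! hunb
  have hseq (n : ℕ) : ∃ a ∈ A, ∃ b ∈ A, (n : ℝ) < |G (cpSub a b)| := by
    obtain ⟨_, ⟨a, ha, b, hb, rfl⟩, hn⟩ := hunb n
    exact ⟨a, ha, b, hb, hn⟩
  choose a ha b hb hab using hseq
  obtain ⟨D, hD, hGD⟩ := exists_countable_tendsto_of_continuous hG
  choose M hM using hA.exists_abs_apply_le
  have := hD.to_subtype
  obtain ⟨L, φ, hφ, hL⟩ := exists_strictMono_tendsto_of_abs_le
    (fun n => Sum.elim (fun x : D => (a n).1 x) (fun x : D => (b n).1 x))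
    (Sum.elim (fun x : D => M x) (fun x : D => M x))
    (by rintro n (x | x) <;> simp [hM _ _ (ha n), hM _ _ (hb n)])
  obtain ⟨u, hu⟩ := hcc A hA (a ∘ φ) fun j => ha _
  obtain ⟨v, hv⟩ := hcc A hA (b ∘ φ) fun j => hb _
  have heval (x : X) : Continuous fun g : Cp X => g.1 x :=
    (continuous_apply x).comp continuous_subtype_val
  have hconv : ∀ x ∈ D, Tendsto (fun j => (cpSub (a (φ j)) (b (φ j))).1 x) atTop
      (𝓝 ((cpSub u v).1 x)) := by
    intro x hx
    have ha' := tendsto_pi_nhds.1 hL (Sum.inl ⟨x, hx⟩)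
    have hb' := tendsto_pi_nhds.1 hL (Sum.inr ⟨x, hx⟩)
    simp only [Function.comp_def, Sum.elim_inl, Sum.elim_inr] at ha' hb'
    show Tendsto (fun j => (a (φ j)).1 x - (b (φ j)).1 x) atTop (𝓝 (u.1 x - v.1 x))
    rw [(hu.continuousAt_comp (heval x).continuousAt).eq_of_tendsto ha',
      (hv.continuousAt_comp (heval x).continuousAt).eq_of_tendsto hb']
    exact ha'.sub hb'
  refine not_tendsto_atTop_of_tendsto_nhds (hGD _ _ hconv).abs
    (tendsto_atTop_mono (fun j => ?_) tendsto_natCast_atTop_atTop)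
  exact (Nat.cast_le.2 (hφ.id_le j)).trans (hab (φ j)).le

section Oscillation

variable {K : Type*} {f : X × K → ℝ}

def equiOscSet (f : X × K → ℝ) (ε : ℝ) : Set X :=
  {x | ∃ U, IsOpen U ∧ x ∈ U ∧ ∀ x' ∈ U, ∀ x'' ∈ U, ∀ y, |f (x', y) - f (x'', y)| ≤ ε}

lemma isOpen_equiOscSet (f : X × K → ℝ) (ε : ℝ) : IsOpen (equiOscSet f ε) :=
  isOpen_iff_forall_mem_open.2 fun _ ⟨U, hU, hxU, hosc⟩ =>
    ⟨U, fun _ hx' => ⟨U, hU, hx', hosc⟩, hU, hxU⟩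

lemma equiOscSet_mono (f : X × K → ℝ) {δ ε : ℝ} (h : δ ≤ ε) :
    equiOscSet f δ ⊆ equiOscSet f ε :=
  fun _ ⟨U, hU, hxU, hosc⟩ =>
    ⟨U, hU, hxU, fun x' hx' x'' hx'' y => (hosc x' hx' x'' hx'' y).trans h⟩

lemma mem_equiOscSet_of_finite_approx (hf : ∀ y, Continuous fun x => f (x, y)) {ε : ℝ}
    (hε : 0 < ε) {U : Set X} (hU : IsOpen U) {x₀ : X} (hx₀ : x₀ ∈ U) {F : Set K}
    (hF : F.Finite) (happrox : ∀ y, ∃ c ∈ F, ∀ x ∈ U, |f (x, y) - f (x, c)| ≤ ε / 4) :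
    x₀ ∈ equiOscSet f ε := by
  refine ⟨U ∩ ⋂ c ∈ F, {x | |f (x, c) - f (x₀, c)| < ε / 4},
    hU.inter (hF.isOpen_biInter fun c _ =>
      isOpen_lt ((hf c).sub continuous_const).abs continuous_const),
    ⟨hx₀, mem_iInter₂.2 fun c _ => by simpa using by positivity⟩, ?_⟩
  rintro x' ⟨hx'U, hx'F⟩ x'' ⟨hx''U, hx''F⟩ y
  obtain ⟨c, hc, hyc⟩ := happrox y
  have h₁ := abs_le.1 (hyc x' hx'U)
  have h₂ := abs_le.1 (hyc x'' hx''U)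
  have h₃ := abs_lt.1 (show |f (x', c) - f (x₀, c)| < ε / 4 from mem_iInter₂.1 hx'F c hc)
  have h₄ := abs_lt.1 (show |f (x'', c) - f (x₀, c)| < ε / 4 from mem_iInter₂.1 hx''F c hc)
  exact abs_le.2 ⟨by linarith [h₁.1, h₂.2, h₃.1, h₄.2], by linarith [h₁.2, h₂.1, h₃.2, h₄.1]⟩

variable [TopologicalSpace K]

def SeparatelyContinuous.toCp (hf : SeparatelyContinuous f) (y : K) : Cp X :=
  ⟨fun x => f (x, y), hf.2 y⟩

lemma SeparatelyContinuous.continuous_toCp (hf : SeparatelyContinuous f) :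
    Continuous hf.toCp :=
  (continuous_pi hf.1).subtype_mk _

lemma continuousAt_of_forall_mem_equiOscSet (hf : ∀ x, Continuous fun y => f (x, y)) {x : X}
    (hx : ∀ ε > 0, x ∈ equiOscSet f ε) (y : K) : ContinuousAt f (x, y) := by
  refine Metric.tendsto_nhds.2 fun ε hε => ?_
  obtain ⟨U, hU, hxU, hosc⟩ := hx (ε / 2) (by positivity)
  have hy := Metric.tendsto_nhds.1 ((hf x).tendsto y) (ε / 2) (by positivity)
  filter_upwards [prod_mem_nhds (hU.mem_nhds hxU) hy] with q ⟨hq₁, hq₂⟩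
  calc dist (f q) (f (x, y)) ≤ dist (f (q.1, q.2)) (f (x, q.2)) + dist (f (x, q.2)) (f (x, y)) :=
        dist_triangle _ _ _
    _ < ε := by
      rw [Real.dist_eq (f (q.1, q.2))]
      linarith [hosc q.1 hq₁ x hxU q.2, show dist (f (x, q.2)) (f (x, y)) < ε / 2 from hq₂]

lemma exists_finite_forall_exists_abs_sub_le {ι : Type*} (hK : BoundedIn (univ : Set K))
    {g : ι → K → ℝ} (hg : ∀ i, Continuous (g i)) (s : Finset ι) {δ : ℝ} (hδ : 0 < δ) :
    ∃ F : Set K, F.Finite ∧ ∀ y, ∃ c ∈ F, ∀ i ∈ s, |g i y - g i c| ≤ δ := by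
  choose M hM using fun i : s => hK _ (hg i)
  let Ψ (y : K) (i : s) : ℝ := g i y
  have htb : TotallyBounded (range Ψ) :=
    (isCompact_univ_pi fun i => isCompact_Icc (a := -M i) (b := M i)).totallyBounded.subset
      (by rintro _ ⟨y, rfl⟩ i -; exact abs_le.1 (hM i y (mem_univ y)))
  obtain ⟨t, hts, htfin, hcover⟩ := Metric.finite_approx_of_totallyBounded htb δ hδ
  obtain ⟨F, -, hF, hcover⟩ := exists_subset_image_finite_and
    (p := fun t => range Ψ ⊆ ⋃ z ∈ t, Metric.ball z δ) |>.1
      ⟨t, image_univ (f := Ψ) ▸ hts, htfin, hcover⟩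
  refine ⟨F, hF, fun y => ?_⟩
  obtain ⟨_, ⟨c, hc, rfl⟩, hyc⟩ := mem_iUnion₂.1 (hcover (mem_range_self y))
  exact ⟨c, hc, fun i hi => (Real.dist_eq _ _ ▸ dist_le_pi_dist (Ψ y) (Ψ c) ⟨i, hi⟩).trans
    (Metric.mem_ball.1 hyc).le⟩

lemma exists_pair_of_notMem_equiOscSet (hK : BoundedIn (univ : Set K))
    (hf : SeparatelyContinuous f) {ε δ : ℝ} (hε : 0 < ε) (hδ : 0 < δ) {U : Set X}
    (hU : IsOpen U) {x₀ : X} (hx₀ : x₀ ∈ U) (hx₀E : x₀ ∉ equiOscSet f ε) (s : Finset X) :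
    ∃ y z : K, (∀ x ∈ s, |f (x, y) - f (x, z)| ≤ δ) ∧ ∃ x ∈ U, ε / 4 < f (x, y) - f (x, z) := by
  by_contra! H
  obtain ⟨F, hF, hnet⟩ := exists_finite_forall_exists_abs_sub_le hK hf.1 s hδ
  refine hx₀E (mem_equiOscSet_of_finite_approx hf.2 hε hU hx₀ hF fun y => ?_)
  obtain ⟨c, hc, hyc⟩ := hnet y
  refine ⟨c, hc, fun x hx => abs_le.2 ⟨?_, H y c hyc x hx⟩⟩
  linarith [H c y (fun x hx => abs_sub_comm (f (x, c)) _ ▸ hyc x hx) x hx]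

end Oscillation

lemma getLast?_hist_succ {A : Type*} (b : ℕ → A) (n : ℕ) :
    (hist b (n + 1)).getLast? = some (b n) := by
  rw [hist, List.ofFn_succ']
  simp

lemma length_hist {A : Type*} (b : ℕ → A) (n : ℕ) : (hist b n).length = n :=
  List.length_ofFn

lemma map_hist {A B : Type*} (g : A → B) (b : ℕ → A) (n : ℕ) :
    (hist b n).map g = hist (g ∘ b) n :=
  List.map_ofFn

lemma mem_hist {A : Type*} (b : ℕ → A) {i n : ℕ} (hi : i < n) : b i ∈ hist b n :=
  List.mem_ofFn.2 ⟨⟨i, hi⟩, rfl⟩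

def IsLegalResponse (V₀ : Set X) (next : Set X → List X → Set X) : Prop :=
  ∀ U l, IsOpen U → U.Nonempty → U ⊆ V₀ →
    IsOpen (next U l) ∧ (next U l).Nonempty ∧ next U l ⊆ U

/-- β opens with `V₀` and answers α's last move `(Uₙ, aₙ)` by `next Uₙ [a₀, …, aₙ]`. -/
def betaStrategyOf (V₀ : Set X) (next : Set X → List X → Set X) : BetaStrategy X :=
  fun l => l.getLast?.elim V₀ fun p => next p.1 (l.map Prod.snd)

lemma betaStrategyOf_hist_succ {α : Type*} {V₀ : Set α} {next : Set α → List α → Set α}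
    (U : ℕ → Set α) (a : ℕ → α) (n : ℕ) :
    betaStrategyOf V₀ next (hist (fun j => (U j, a j)) (n + 1)) = next (U n) (hist a (n + 1)) := by
  simp only [betaStrategyOf, getLast?_hist_succ, Option.elim_some, map_hist]
  rfl

section Strategy

variable {V₀ : Set X} {next : Set X → List X → Set X}

lemma subset_of_alphaLegal_betaStrategyOf (hnext : IsLegalResponse V₀ next) {U : ℕ → Set X}
    {a : ℕ → X} {n : ℕ} (hleg : AlphaLegal (betaStrategyOf V₀ next) U a n) :
    ∀ i < n, U i ⊆ V₀ := by
  intro i hi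
  induction i with
  | zero => exact (hleg 0 hi).2.2
  | succ i ih =>
    obtain ⟨hUo, hUne, -⟩ := hleg i (by omega)
    have hsub := (hleg (i + 1) hi).2.2
    rw [betaStrategyOf_hist_succ] at hsub
    exact hsub.trans ((hnext _ _ hUo hUne (ih (by omega))).2.2.trans (ih (by omega)))

lemma betaLegal_betaStrategyOf (hV₀ : IsOpen V₀) (hne : V₀.Nonempty)
    (hnext : IsLegalResponse V₀ next) : BetaLegal (betaStrategyOf V₀ next) := by
  rintro U a (_ | m) hleg
  · exact ⟨hV₀, hne, fun m hm => by omega⟩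
  · obtain ⟨hUo, hUne, -⟩ := hleg m m.lt_succ_self
    rw [betaStrategyOf_hist_succ]
    obtain ⟨ho, hne, hsub⟩ :=
      hnext _ _ hUo hUne (subset_of_alphaLegal_betaStrategyOf hnext hleg m m.lt_succ_self)
    exact ⟨ho, hne, fun m' hm' => Nat.succ_injective hm' ▸ hsub⟩

/-- A winning play of α against `betaStrategyOf V₀ next`. -/
theorem SigmaGammaBetaDefavorable.exists_play {Γ : Set (X → ℝ)}
    (hX : SigmaGammaBetaDefavorable X Γ) (hV₀ : IsOpen V₀) (hne : V₀.Nonempty)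
    (hnext : IsLegalResponse V₀ next) :
    ∃ (U : ℕ → Set X) (a : ℕ → X), (∀ n, IsOpen (U n) ∧ (U n).Nonempty ∧ U n ⊆ V₀) ∧
      (∀ n, U (n + 1) ⊆ next (U n) (hist a (n + 1))) ∧ AlphaWinsGamma Γ U a := by
  by_contra! hlose
  refine hX ⟨betaStrategyOf V₀ next, betaLegal_betaStrategyOf hV₀ hne hnext,
    fun U a hleg => hlose U a (fun n => ?_) (fun n => ?_)⟩
  · obtain ⟨hUo, hUne, -⟩ := hleg (n + 1) n n.lt_succ_self
    exact ⟨hUo, hUne, subset_of_alphaLegal_betaStrategyOf hnext (hleg (n + 1)) n n.lt_succ_self⟩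
  · simpa only [betaStrategyOf_hist_succ] using (hleg (n + 2) (n + 1) (by omega)).2.2

end Strategy

theorem baireSpace_of_sigmaGammaBetaDefavorable {Γ : Set (X → ℝ)}
    (hX : SigmaGammaBetaDefavorable X Γ) (hΓ : Γ.Nonempty) : BaireSpace X := by
  refine ⟨fun G hGo hGd => dense_iff_inter_open.2 fun V hV hVne => ?_⟩
  have hnext : IsLegalResponse V fun U l => U ∩ G (l.length - 1) := fun U l hU hUne _ =>
    ⟨hU.inter (hGo _), (hGd _).inter_open_nonempty U hU hUne, inter_subset_left⟩
  obtain ⟨U, a, hU, hstep, hwin⟩ := hX.exists_play hV hVne hnext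
  obtain ⟨g, hg⟩ := hΓ
  obtain ⟨t, ht, -⟩ := hwin g hg
  rw [mem_iInter] at ht
  refine ⟨t, (hU 0).2.2 (ht 0), mem_iInter.2 fun n => ?_⟩
  simpa [length_hist] using (hstep n (ht (n + 1))).2

lemma not_alphaWinsGamma_of_mapClusterPt {U : ℕ → Set X} {a : ℕ → X} {d : ℕ → Cp X}
    {g : Cp X} (hg : MapClusterPt g atTop d) {δ : ℕ → ℝ} (hδ : Tendsto δ atTop (𝓝 0))
    (hsmall : ∀ n, ∀ i ≤ n, |(d n).1 (a i)| ≤ δ n) {c : ℝ} (hc : 0 < c)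
    (hgap : ∀ n, ∀ t ∈ U (n + 1), c < (d n).1 t) :
    ¬ AlphaWinsGamma {g : X → ℝ | Continuous g} U a := by
  have heval (x : X) : MapClusterPt (g.1 x) atTop fun n => (d n).1 x :=
    hg.continuousAt_comp ((continuous_apply x).comp continuous_subtype_val).continuousAt
  have hzero (i : ℕ) : g.1 (a i) = 0 :=
    (heval (a i)).eq_of_tendsto
      (squeeze_zero_norm' (eventually_atTop.2 ⟨i, fun n hn => hsmall n i hn⟩) hδ)
  intro hwin
  obtain ⟨t, ht, hcl⟩ := hwin g.1 g.2
  simp only [hzero, range_const, closure_singleton, mem_singleton_iff] at hcl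
  have hct : c ≤ g.1 t := isClosed_Ici.mem_of_mapClusterPt (heval t)
    (Eventually.of_forall fun n => (hgap n t (mem_iInter.1 ht (n + 1))).le)
  linarith

theorem dense_equiOscSet {K : Type*} [TopologicalSpace K] {f : X × K → ℝ}
    (hX : SigmaGammaBetaDefavorable X {g : X → ℝ | Continuous g})
    (hcc : ∀ Y : Set (Cp X), BoundedIn Y → RelCountablyCompact Y)
    (hK : BoundedIn (univ : Set K)) (hf : SeparatelyContinuous f) {ε : ℝ} (hε : 0 < ε) :
    Dense (equiOscSet f ε) := by
  classical
  refine dense_iff_inter_open.2 fun V₀ hV₀ hV₀ne => ?_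
  by_contra hdisj
  have hV₀E : ∀ x ∈ V₀, x ∉ equiOscSet f ε := fun x hx hxE => hdisj ⟨x, hx, hxE⟩
  obtain ⟨x₀, hx₀⟩ := hV₀ne
  -- an element of `K`, which exists since `x₀ ∉ equiOscSet f ε`
  obtain ⟨y₀, -⟩ := exists_pair_of_notMem_equiOscSet hK hf hε one_pos hV₀ hx₀ (hV₀E x₀ hx₀) ∅
  have hpair (U : Set X) (l : List X) : ∃ p : K × K, IsOpen U → U.Nonempty → U ⊆ V₀ →
      (∀ x ∈ l, |f (x, p.1) - f (x, p.2)| ≤ 1 / (l.length + 1)) ∧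
        ∃ x ∈ U, ε / 4 < f (x, p.1) - f (x, p.2) := by
    by_cases hU : IsOpen U ∧ U.Nonempty ∧ U ⊆ V₀
    · obtain ⟨hUo, ⟨x, hx⟩, hUV₀⟩ := hU
      obtain ⟨y, z, hsmall, hgap⟩ := exists_pair_of_notMem_equiOscSet hK hf hε
        (δ := 1 / (l.length + 1)) (by positivity) hUo hx (hV₀E x (hUV₀ hx)) l.toFinset
      exact ⟨(y, z), fun _ _ _ => ⟨fun x hx => hsmall x (List.mem_toFinset.2 hx), hgap⟩⟩
    · exact ⟨(y₀, y₀), fun hUo hUne hUV₀ => absurd ⟨hUo, hUne, hUV₀⟩ hU⟩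
  choose p hp using hpair
  let next (U : Set X) (l : List X) : Set X :=
    U ∩ {x | ε / 4 < f (x, (p U l).1) - f (x, (p U l).2)}
  have hnext : IsLegalResponse V₀ next := fun U l hUo hUne hUV₀ =>
    ⟨hUo.inter (isOpen_lt continuous_const ((hf.2 _).sub (hf.2 _))),
      (hp U l hUo hUne hUV₀).2, inter_subset_left⟩
  obtain ⟨U, a, hU, hstep, hwin⟩ := hX.exists_play hV₀ ⟨x₀, hx₀⟩ hnext
  let q (n : ℕ) : K × K := p (U n) (hist a (n + 1))
  let d (n : ℕ) : Cp X := cpSub (hf.toCp (q n).1) (hf.toCp (q n).2)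
  have hbdd := boundedIn_image2_cpSub hcc (hK.image hf.continuous_toCp)
  obtain ⟨g, hg⟩ := hcc _ hbdd d fun n =>
    mem_image2_of_mem (mem_image_of_mem _ (mem_univ _)) (mem_image_of_mem _ (mem_univ _))
  refine not_alphaWinsGamma_of_mapClusterPt hg
    (tendsto_one_div_add_atTop_nhds_zero_nat.comp (tendsto_add_atTop_nat 1))
    (fun n i hi => ?_) (by positivity : 0 < ε / 4) (fun n t ht => (hstep n ht).2) hwin
  have := (hp _ _ (hU n).1 (hU n).2.1 (hU n).2.2).1 (a i) (mem_hist a (Nat.lt_succ_of_le hi))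
  rw [length_hist] at this
  exact this

end SepJoint

open SepJoint in
/-- Corollary 3.3 (1): `X` σ_{C(X)}-β-defavorable, `K` pseudocompact, and
every bounded subspace of `C_p(X)` relatively countably compact in `C_p(X)`; then `f` is
jointly continuous at each point of `R × K` for some dense Gδ set `R ⊆ X`. -/
theorem denseGdelta_joint_continuity_of_pseudocompact
    {X K : Type*} [TopologicalSpace X] [TopologicalSpace K]
    (hX : SigmaGammaBetaDefavorable X {g : X → ℝ | Continuous g})
    (hK : Pseudocompact K)
    (hcc : ∀ Y : Set {g : X → ℝ // Continuous g}, BoundedIn Y → RelCountablyCompact Y)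
    (f : X × K → ℝ) (hf : SeparatelyContinuous f) :
    ∃ R : Set X, Dense R ∧ IsGδ R ∧ ∀ x ∈ R, ∀ y : K, ContinuousAt f (x, y) := by
  have : BaireSpace X := baireSpace_of_sigmaGammaBetaDefavorable hX ⟨0, continuous_const⟩
  refine ⟨⋂ n : ℕ, equiOscSet f (1 / (n + 1)), ?_, .iInter fun n => (isOpen_equiOscSet f _).isGδ,
    fun x hx => continuousAt_of_forall_mem_equiOscSet hf.1 fun ε hε => ?_⟩
  · exact dense_iInter_of_isOpen (fun n => isOpen_equiOscSet f _)
      fun n => dense_equiOscSet hX hcc hK.2 hf (by positivity)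
  · obtain ⟨n, hn⟩ := exists_nat_one_div_lt hε
    exact equiOscSet_mono f hn.le (mem_iInter.1 hx n)
end
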